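/- arXiv:1409.2695 — 5 statements merged into one kernel-verified Lean document; each statement's English description precedes it below -/
import Mathlib

section
/- For even n = 2k ≥ 4, lmd(S_n) = 3: no 2-element subset of V(S_n) is a local resolving set, and some 3-element subset is. -/
/-- Layers: 0 = a, 1 = b, 2 = c, 3 = d. Vertex `(ℓ, i)` is `ℓ_i` (indices mod `n`). -/
def snRel (n : ℕ) (x y : Fin 4 × ZMod n) : Prop :=
  (x.1 = y.1 ∧ y.2 = x.2 + 1) ∨                                -- cycle edges on each layer
  (x.1 = 0 ∧ y.1 = 1 ∧ (x.2 = y.2 ∨ x.2 = y.2 + 1)) ∨          -- a_i b_i and a_{i+1} b_i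
  (x.1 = 1 ∧ y.1 = 2 ∧ x.2 = y.2) ∨                            -- b_i c_i
  (x.1 = 2 ∧ y.1 = 3 ∧ x.2 = y.2)                              -- c_i d_i

/-- The convex polytope graph `S_n`. -/
def Sn (n : ℕ) : SimpleGraph (Fin 4 × ZMod n) := SimpleGraph.fromRel (snRel n)

namespace SnAux

variable {n : ℕ}

/-- circular distance from 0 -/
def fzn (n : ℕ) (z : ZMod n) : ℕ := min z.val (n - z.val)

lemma mod_helper [NeZero n] (m : ℕ) (h : m < 2 * n) :
    m % n = if m < n then m else m - n := by
  have hn : 0 < n := Nat.pos_of_ne_zero (NeZero.ne n)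
  split_ifs with h1
  · exact Nat.mod_eq_of_lt h1
  · rw [Nat.mod_eq_sub_mod (le_of_not_gt h1), Nat.mod_eq_of_lt (by omega)]

lemma val_add' [NeZero n] (a b : ZMod n) :
    (a + b).val = if a.val + b.val < n then a.val + b.val else a.val + b.val - n := by
  rw [ZMod.val_add, mod_helper _ (by have := a.val_lt; have := b.val_lt; omega)]

lemma val_neg' [NeZero n] (a : ZMod n) :
    (-a).val = if a.val = 0 then 0 else n - a.val := by
  rw [ZMod.neg_val]
  rcases eq_or_ne a 0 with h | h
  · simp [h]
  · rw [if_neg h, if_neg (by simpa [ZMod.val_eq_zero] using h)]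

section even
variable {k : ℕ}

lemma one_val (hk : 1 ≤ k) : (1 : ZMod (2 * k)).val = 1 := by
  haveI : NeZero (2 * k) := ⟨by omega⟩
  rw [← Nat.cast_one, ZMod.val_natCast_of_lt (by omega)]

lemma kcast_val (hk : 1 ≤ k) : ((k : ℕ) : ZMod (2 * k)).val = k := by
  haveI : NeZero (2 * k) := ⟨by omega⟩
  rw [ZMod.val_natCast_of_lt (by omega)]

lemma val_add_one (hk : 1 ≤ k) (z : ZMod (2 * k)) :
    (z + 1).val = if z.val = 2 * k - 1 then 0 else z.val + 1 := by
  haveI : NeZero (2 * k) := ⟨by omega⟩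
  have hz := z.val_lt
  rw [val_add', one_val hk]
  split_ifs <;> omega

lemma val_sub_one (hk : 1 ≤ k) (z : ZMod (2 * k)) :
    (z - 1).val = if z.val = 0 then 2 * k - 1 else z.val - 1 := by
  haveI : NeZero (2 * k) := ⟨by omega⟩
  have hz := z.val_lt
  have hneg : ((-1 : ZMod (2 * k))).val = 2 * k - 1 := by
    rw [val_neg', one_val hk]; norm_num
  rw [sub_eq_add_neg, val_add', hneg]
  split_ifs <;> omega

lemma fz_def (hk : 1 ≤ k) (z : ZMod (2 * k)) :
    fzn (2 * k) z = if z.val ≤ k then z.val else 2 * k - z.val := by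
  haveI : NeZero (2 * k) := ⟨by omega⟩
  have hz := z.val_lt
  unfold fzn
  split_ifs <;> omega

lemma fz_succ_of_lt (hk : 1 ≤ k) {z : ZMod (2 * k)} (h : z.val < k) :
    fzn (2 * k) (z + 1) = fzn (2 * k) z + 1 := by
  haveI : NeZero (2 * k) := ⟨by omega⟩
  have hz := z.val_lt
  rw [fz_def hk, fz_def hk, val_add_one hk]
  split_ifs <;> omega

lemma fz_succ_of_ge (hk : 1 ≤ k) {z : ZMod (2 * k)} (h : k ≤ z.val) :
    fzn (2 * k) z = fzn (2 * k) (z + 1) + 1 := by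
  haveI : NeZero (2 * k) := ⟨by omega⟩
  have hz := z.val_lt
  rw [fz_def hk, fz_def hk, val_add_one hk]
  split_ifs <;> omega

lemma fz_pred_of_le (hk : 1 ≤ k) {z : ZMod (2 * k)} (h0 : z.val ≠ 0) (h : z.val ≤ k) :
    fzn (2 * k) z = fzn (2 * k) (z - 1) + 1 := by
  haveI : NeZero (2 * k) := ⟨by omega⟩
  have h1 : (z - 1).val < k := by rw [val_sub_one hk]; split_ifs <;> omega
  have := fz_succ_of_lt hk h1
  rwa [sub_add_cancel] at this

lemma fz_pred_of_gt (hk : 1 ≤ k) {z : ZMod (2 * k)} (h : k + 1 ≤ z.val ∨ z.val = 0) :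
    fzn (2 * k) (z - 1) = fzn (2 * k) z + 1 := by
  haveI : NeZero (2 * k) := ⟨by omega⟩
  have hz := z.val_lt
  have h1 : k ≤ (z - 1).val := by rw [val_sub_one hk]; split_ifs <;> omega
  have := fz_succ_of_ge hk h1
  rwa [sub_add_cancel] at this

lemma fz_val_zero (hk : 1 ≤ k) {z : ZMod (2 * k)} (h : z.val = 0) : fzn (2 * k) z = 0 := by
  haveI : NeZero (2 * k) := ⟨by omega⟩
  rw [fz_def hk]; split_ifs <;> omega

lemma fz_ne_zero (hk : 1 ≤ k) {z : ZMod (2 * k)} (h : z.val ≠ 0) : fzn (2 * k) z ≠ 0 := by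
  haveI : NeZero (2 * k) := ⟨by omega⟩
  have hz := z.val_lt
  rw [fz_def hk]; split_ifs <;> omega

lemma fz_neg (hk : 1 ≤ k) (z : ZMod (2 * k)) : fzn (2 * k) (-z) = fzn (2 * k) z := by
  haveI : NeZero (2 * k) := ⟨by omega⟩
  have hz := z.val_lt
  rw [fz_def hk, fz_def hk, val_neg']
  split_ifs <;> omega

lemma fz_lip (hk : 1 ≤ k) (z : ZMod (2 * k)) :
    fzn (2 * k) (z + 1) ≤ fzn (2 * k) z + 1 ∧ fzn (2 * k) z ≤ fzn (2 * k) (z + 1) + 1 := by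
  haveI : NeZero (2 * k) := ⟨by omega⟩
  rcases lt_or_ge z.val k with h | h
  · rw [fz_succ_of_lt hk h]; omega
  · rw [fz_succ_of_ge hk h]; omega

end even
end SnAux
namespace SnAux
section graph
variable {k : ℕ}

/-- distance between layers -/
def ldist (a b : Fin 4) : ℕ := max a.val b.val - min a.val b.val

/-- closed-form distance in `S_{2k}` -/
def DD (k : ℕ) (x y : Fin 4 × ZMod (2 * k)) : ℕ :=
  ldist x.1 y.1 +
    (if x.1 = 0 ∧ y.1 ≠ 0 then
        min (fzn (2 * k) (y.2 - x.2)) (fzn (2 * k) (y.2 - x.2 + 1))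
     else if y.1 = 0 ∧ x.1 ≠ 0 then
        min (fzn (2 * k) (y.2 - x.2)) (fzn (2 * k) (y.2 - x.2 - 1))
     else fzn (2 * k) (y.2 - x.2))

lemma one_ne_zero' (hk : 1 ≤ k) : (1 : ZMod (2 * k)) ≠ 0 := by
  intro h
  have := one_val hk
  rw [h, ZMod.val_zero] at this
  omega

lemma adj_h (hk : 1 ≤ k) (l : Fin 4) (i : ZMod (2 * k)) :
    (Sn (2 * k)).Adj (l, i) (l, i + 1) := by
  rw [Sn, SimpleGraph.fromRel_adj]
  refine ⟨?_, Or.inl (Or.inl ⟨rfl, rfl⟩)⟩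
  intro h
  have h2 : i = i + 1 := congrArg Prod.snd h
  have h1 : (1 : ZMod (2 * k)) = 0 := by linear_combination -h2
  exact one_ne_zero' hk h1

lemma adj_ab (hk : 1 ≤ k) (i : ZMod (2 * k)) : (Sn (2 * k)).Adj (0, i) (1, i) := by
  rw [Sn, SimpleGraph.fromRel_adj]
  exact ⟨by simp, Or.inl (Or.inr (Or.inl ⟨rfl, rfl, Or.inl rfl⟩))⟩

lemma adj_diag (hk : 1 ≤ k) (i : ZMod (2 * k)) :
    (Sn (2 * k)).Adj (0, i + 1) (1, i) := by
  rw [Sn, SimpleGraph.fromRel_adj]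
  exact ⟨by simp, Or.inl (Or.inr (Or.inl ⟨rfl, rfl, Or.inr rfl⟩))⟩

lemma adj_bc (hk : 1 ≤ k) (i : ZMod (2 * k)) : (Sn (2 * k)).Adj (1, i) (2, i) := by
  rw [Sn, SimpleGraph.fromRel_adj]
  exact ⟨by simp, Or.inl (Or.inr (Or.inr (Or.inl ⟨rfl, rfl, rfl⟩)))⟩

lemma adj_cd (hk : 1 ≤ k) (i : ZMod (2 * k)) : (Sn (2 * k)).Adj (2, i) (3, i) := by
  rw [Sn, SimpleGraph.fromRel_adj]
  exact ⟨by simp, Or.inl (Or.inr (Or.inr (Or.inr ⟨rfl, rfl, rfl⟩)))⟩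

end graph
end SnAux
namespace SnAux
section lip
variable {k : ℕ}

lemma fz_lip' (hk : 1 ≤ k) (z : ZMod (2 * k)) :
    fzn (2 * k) z ≤ fzn (2 * k) (z - 1) + 1 ∧ fzn (2 * k) (z - 1) ≤ fzn (2 * k) z + 1 := by
  have := fz_lip hk (z - 1); rwa [sub_add_cancel] at this

lemma rel_lip (hk : 1 ≤ k) {x y : Fin 4 × ZMod (2 * k)} (h : snRel (2 * k) x y)
    (w : Fin 4 × ZMod (2 * k)) :
    DD k x w ≤ DD k y w + 1 ∧ DD k y w ≤ DD k x w + 1 := by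
  obtain ⟨l1, i⟩ := x
  obtain ⟨l2, j⟩ := y
  obtain ⟨lw, m⟩ := w
  rcases h with ⟨h1, h2⟩ | ⟨h1, h2, h3⟩ | ⟨h1, h2, h3⟩ | ⟨h1, h2, h3⟩
  · -- horizontal edge: l1 = l2, j = i + 1
    simp only at h1 h2; subst h1; subst h2
    have e1 : m - (i + 1) = (m - i) - 1 := by ring
    have e2 : m - (i + 1) + 1 = (m - i) := by ring
    have e3 : m - (i + 1) - 1 = (m - i) - 1 - 1 := by ring
    have p1 := fz_lip hk (m - i)
    have p2 := fz_lip' hk (m - i)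
    have p3 := fz_lip' hk ((m - i) - 1)
    fin_cases l1 <;> fin_cases lw <;>
      simp (config := { decide := true }) only [DD, ldist, ite_true, ite_false, sub_add_cancel, e1, e2, e3] <;> omega
  · -- ab edges: l1 = 0, l2 = 1, i = j ∨ i = j + 1
    simp only at h1 h2 h3; subst h1; subst h2
    rcases h3 with h3 | h3
    · subst h3
      have p1 := fz_lip hk (m - i)
      have p2 := fz_lip' hk (m - i)
      fin_cases lw <;> simp (config := { decide := true }) only [DD, ldist, ite_true, ite_false, sub_add_cancel] <;> omega
    · subst h3
      have e1 : m - (j + 1) = (m - j) - 1 := by ring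
      have e2 : m - (j + 1) + 1 = (m - j) := by ring
      have p1 := fz_lip hk (m - j)
      have p2 := fz_lip' hk (m - j)
      fin_cases lw <;> simp (config := { decide := true }) only [DD, ldist, ite_true, ite_false, sub_add_cancel, e1, e2] <;> omega
  · -- bc edge
    simp only at h1 h2 h3; subst h1; subst h2; subst h3
    have p2 := fz_lip' hk (m - i)
    fin_cases lw <;> simp (config := { decide := true }) only [DD, ldist, ite_true, ite_false, sub_add_cancel] <;> omega
  · -- cd edge
    simp only at h1 h2 h3; subst h1; subst h2; subst h3
    have p2 := fz_lip' hk (m - i)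
    fin_cases lw <;> simp (config := { decide := true }) only [DD, ldist, ite_true, ite_false, sub_add_cancel] <;> omega

end lip
end SnAux
namespace SnAux
section descend
variable {k : ℕ}

lemma adj_h' (hk : 1 ≤ k) (l : Fin 4) (i : ZMod (2 * k)) :
    (Sn (2 * k)).Adj (l, i) (l, i - 1) := by
  have := (adj_h hk l (i - 1)).symm
  rwa [sub_add_cancel] at this

lemma adj_diag' (hk : 1 ≤ k) (i : ZMod (2 * k)) :
    (Sn (2 * k)).Adj (0, i) (1, i - 1) := by
  have := adj_diag hk (i - 1)
  rwa [sub_add_cancel] at this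

lemma descend (hk : 1 ≤ k) (x y : Fin 4 × ZMod (2 * k)) (h : x ≠ y) :
    ∃ x', (Sn (2 * k)).Adj x x' ∧ DD k x' y + 1 = DD k x y := by
  haveI : NeZero (2 * k) := ⟨by omega⟩
  obtain ⟨l1, m1⟩ := x
  obtain ⟨l2, m2⟩ := y
  have same_layer : ∀ l : Fin 4, (l, m1) ≠ ((l, m2) : Fin 4 × ZMod (2 * k)) →
      (∀ w, DD k (l, w) (l, m2) = fzn (2 * k) (m2 - w)) →
      ∃ x', (Sn (2 * k)).Adj (l, m1) x' ∧ DD k x' (l, m2) + 1 = DD k (l, m1) (l, m2) := by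
    intro l hne hDD
    have hz : (m2 - m1).val ≠ 0 := by
      rw [Ne, ZMod.val_eq_zero]
      intro e
      refine hne ?_
      have : m1 = m2 := by linear_combination -e
      rw [this]
    rcases le_or_gt (m2 - m1).val k with hr | hr
    · refine ⟨(l, m1 + 1), adj_h hk l m1, ?_⟩
      have p := fz_pred_of_le hk hz hr
      rw [hDD, hDD]
      have e1 : m2 - (m1 + 1) = (m2 - m1) - 1 := by ring
      rw [e1]
      omega
    · refine ⟨(l, m1 - 1), adj_h' hk l m1, ?_⟩
      have p := fz_succ_of_ge hk (le_of_lt hr)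
      rw [hDD, hDD]
      have e1 : m2 - (m1 - 1) = (m2 - m1) + 1 := by ring
      rw [e1]
      omega
  have scriptA : ∀ l2' : Fin 4, 1 ≤ l2'.val →
      (∀ w, DD k (0, w) (l2', m2) =
        l2'.val + min (fzn (2 * k) (m2 - w)) (fzn (2 * k) (m2 - w + 1))) →
      (∀ w, DD k (1, w) (l2', m2) = (l2'.val - 1) + fzn (2 * k) (m2 - w)) →
      ∃ x', (Sn (2 * k)).Adj (0, m1) x' ∧
        DD k x' (l2', m2) + 1 = DD k (0, m1) (l2', m2) := by
    intro l2' hl2v hDa hDb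
    by_cases h0 : (m2 - m1).val = 0
    · refine ⟨(1, m1), adj_ab hk m1, ?_⟩
      have p := fz_val_zero hk h0
      rw [hDa, hDb, p]
      omega
    · by_cases hlast : (m2 - m1).val = 2 * k - 1
      · refine ⟨(1, m1 - 1), adj_diag' hk m1, ?_⟩
        have hv : ((m2 - m1) + 1).val = 0 := by
          rw [val_add_one hk]; split_ifs <;> omega
        have p := fz_val_zero hk hv
        rw [hDa, hDb]
        have e1 : m2 - (m1 - 1) = (m2 - m1) + 1 := by ring
        rw [e1, p]
        omega
      · have hz := (m2 - m1).val_lt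
        rcases lt_or_ge (m2 - m1).val k with hr | hr
        · refine ⟨(0, m1 + 1), adj_h hk 0 m1, ?_⟩
          have p1 := fz_pred_of_le hk h0 (le_of_lt hr)
          have p2 := fz_succ_of_lt hk hr
          rw [hDa, hDa]
          have e1 : m2 - (m1 + 1) = (m2 - m1) - 1 := by ring
          rw [e1, sub_add_cancel]
          omega
        · refine ⟨(0, m1 - 1), adj_h' hk 0 m1, ?_⟩
          have hv1 : ((m2 - m1) + 1).val = (m2 - m1).val + 1 := by
            rw [val_add_one hk]; split_ifs <;> omega
          have p1 := fz_succ_of_ge hk hr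
          have p2 := fz_succ_of_ge hk (z := (m2 - m1) + 1) (by omega)
          rw [hDa, hDa]
          have e2 : m2 - (m1 - 1) + 1 = (m2 - m1) + 1 + 1 := by ring
          have e1 : m2 - (m1 - 1) = (m2 - m1) + 1 := by ring
          rw [e2, e1]
          omega
  have scriptB :
      (∀ w, DD k (1, w) ((0, m2) : Fin 4 × ZMod (2 * k)) =
        1 + min (fzn (2 * k) (m2 - w)) (fzn (2 * k) (m2 - w - 1))) →
      (∀ w, DD k (0, w) ((0, m2) : Fin 4 × ZMod (2 * k)) = fzn (2 * k) (m2 - w)) →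
      ∃ x', (Sn (2 * k)).Adj (1, m1) x' ∧
        DD k x' (0, m2) + 1 = DD k (1, m1) (0, m2) := by
    intro hD hD0
    by_cases h0 : (m2 - m1).val = 0
    · refine ⟨(0, m1), (adj_ab hk m1).symm, ?_⟩
      have p := fz_val_zero hk h0
      rw [hD, hD0, p]
      omega
    · by_cases h1 : (m2 - m1).val = 1
      · refine ⟨(0, m1 + 1), (adj_diag hk m1).symm, ?_⟩
        have hv : ((m2 - m1) - 1).val = 0 := by
          rw [val_sub_one hk]; split_ifs <;> omega
        have p := fz_val_zero hk hv
        rw [hD, hD0]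
        have e1 : m2 - (m1 + 1) = (m2 - m1) - 1 := by ring
        rw [e1, p]
        omega
      · have hz := (m2 - m1).val_lt
        rcases le_or_gt (m2 - m1).val k with hr | hr
        · refine ⟨(1, m1 + 1), adj_h hk 1 m1, ?_⟩
          have hv : ((m2 - m1) - 1).val = (m2 - m1).val - 1 := by
            rw [val_sub_one hk]; split_ifs <;> omega
          have p1 := fz_pred_of_le hk h0 hr
          have p2 := fz_pred_of_le hk (z := (m2 - m1) - 1)
            (by omega) (by omega)
          rw [hD, hD]
          have e2 : m2 - (m1 + 1) - 1 = (m2 - m1) - 1 - 1 := by ring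
          have e1 : m2 - (m1 + 1) = (m2 - m1) - 1 := by ring
          rw [e2, e1]
          omega
        · refine ⟨(1, m1 - 1), adj_h' hk 1 m1, ?_⟩
          have p1 := fz_succ_of_ge hk (le_of_lt hr)
          have p2 := fz_pred_of_gt hk (Or.inl hr)
          rw [hD, hD]
          have e2 : m2 - (m1 - 1) - 1 = (m2 - m1) := by ring
          have e1 : m2 - (m1 - 1) = (m2 - m1) + 1 := by ring
          rw [e2, e1]
          omega
  fin_cases l1 <;> fin_cases l2
  · exact same_layer 0 h (fun w => by
      simp (config := { decide := true }) only [DD, ldist, ite_true, ite_false]; omega)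
  · exact scriptA 1 (by decide)
      (fun w => by
        simp (config := { decide := true }) only [DD, ldist, ite_true, ite_false]; omega)
      (fun w => by
        simp (config := { decide := true }) only [DD, ldist, ite_true, ite_false]; omega)
  · exact scriptA 2 (by decide)
      (fun w => by
        simp (config := { decide := true }) only [DD, ldist, ite_true, ite_false]; omega)
      (fun w => by
        simp (config := { decide := true }) only [DD, ldist, ite_true, ite_false]; omega)
  · exact scriptA 3 (by decide)
      (fun w => by
        simp (config := { decide := true }) only [DD, ldist, ite_true, ite_false]; omega)
      (fun w => by
        simp (config := { decide := true }) only [DD, ldist, ite_true, ite_false]; omega)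
  · exact scriptB
      (fun w => by
        simp (config := { decide := true }) only [DD, ldist, ite_true, ite_false]; omega)
      (fun w => by
        simp (config := { decide := true }) only [DD, ldist, ite_true, ite_false]; omega)
  · exact same_layer 1 h (fun w => by
      simp (config := { decide := true }) only [DD, ldist, ite_true, ite_false]; omega)
  · refine ⟨(2, m1), adj_bc hk m1, ?_⟩
    simp (config := { decide := true }) only [DD, ldist, ite_true, ite_false]; omega
  · refine ⟨(2, m1), adj_bc hk m1, ?_⟩
    simp (config := { decide := true }) only [DD, ldist, ite_true, ite_false]; omega
  · refine ⟨(1, m1), (adj_bc hk m1).symm, ?_⟩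
    simp (config := { decide := true }) only [DD, ldist, ite_true, ite_false]; omega
  · refine ⟨(1, m1), (adj_bc hk m1).symm, ?_⟩
    simp (config := { decide := true }) only [DD, ldist, ite_true, ite_false]; omega
  · exact same_layer 2 h (fun w => by
      simp (config := { decide := true }) only [DD, ldist, ite_true, ite_false]; omega)
  · refine ⟨(3, m1), adj_cd hk m1, ?_⟩
    simp (config := { decide := true }) only [DD, ldist, ite_true, ite_false]; omega
  · refine ⟨(2, m1), (adj_cd hk m1).symm, ?_⟩
    simp (config := { decide := true }) only [DD, ldist, ite_true, ite_false]; omega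
  · refine ⟨(2, m1), (adj_cd hk m1).symm, ?_⟩
    simp (config := { decide := true }) only [DD, ldist, ite_true, ite_false]; omega
  · refine ⟨(2, m1), (adj_cd hk m1).symm, ?_⟩
    simp (config := { decide := true }) only [DD, ldist, ite_true, ite_false]; omega
  · exact same_layer 3 h (fun w => by
      simp (config := { decide := true }) only [DD, ldist, ite_true, ite_false]; omega)

end descend
end SnAux
namespace SnAux
section disteq
variable {k : ℕ}

lemma DD_self (hk : 1 ≤ k) (x : Fin 4 × ZMod (2 * k)) : DD k x x = 0 := by
  haveI : NeZero (2 * k) := ⟨by omega⟩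
  obtain ⟨l, m⟩ := x
  have hcond : ¬((l, m).1 = 0 ∧ ((l, m) : Fin 4 × ZMod (2 * k)).1 ≠ 0) := by tauto
  simp only [DD, if_neg hcond]
  have : fzn (2 * k) (m - m) = 0 := by
    rw [sub_self]
    exact fz_val_zero hk ZMod.val_zero
  simp only [ldist, this]
  omega

lemma walk_lower (hk : 1 ≤ k) {x y : Fin 4 × ZMod (2 * k)} (p : (Sn (2 * k)).Walk x y) :
    DD k x y ≤ p.length := by
  induction p with
  | nil => simp [DD_self hk]
  | cons h p ih =>
    rename_i u v w
    rw [SimpleGraph.Walk.length_cons]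
    have h2 : snRel (2 * k) u v ∨ snRel (2 * k) v u := by
      rw [Sn, SimpleGraph.fromRel_adj] at h
      exact h.2
    rcases h2 with h2 | h2
    · have := (rel_lip hk h2 w).1
      omega
    · have := (rel_lip hk h2 w).2
      omega

lemma exists_walk (hk : 1 ≤ k) :
    ∀ N (x y : Fin 4 × ZMod (2 * k)), DD k x y = N →
      ∃ p : (Sn (2 * k)).Walk x y, p.length = N := by
  intro N
  induction N using Nat.strong_induction_on with
  | _ N ih =>
    intro x y hN
    by_cases hxy : x = y
    · subst hxy
      exact ⟨.nil, by rw [← hN, DD_self hk]; rfl⟩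
    · obtain ⟨x', hadj, hDD⟩ := descend hk x y hxy
      obtain ⟨p, hp⟩ := ih (DD k x' y) (by omega) x' y rfl
      refine ⟨.cons hadj p, ?_⟩
      rw [SimpleGraph.Walk.length_cons, hp]
      omega

lemma dist_eq (hk : 1 ≤ k) (x y : Fin 4 × ZMod (2 * k)) :
    (Sn (2 * k)).dist x y = DD k x y := by
  obtain ⟨p, hp⟩ := exists_walk hk (DD k x y) x y rfl
  refine le_antisymm (hp ▸ SimpleGraph.dist_le p) ?_
  obtain ⟨q, hq⟩ := (p.reachable).exists_walk_length_eq_dist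
  rw [← hq]
  exact walk_lower hk q

lemma sn_connected (hk : 1 ≤ k) : (Sn (2 * k)).Connected := by
  haveI : NeZero (2 * k) := ⟨by omega⟩
  rw [SimpleGraph.connected_iff]
  exact ⟨fun x y => (exists_walk hk (DD k x y) x y rfl).choose.reachable, ⟨(0, 0)⟩⟩

end disteq
end SnAux
namespace SnAux
section part1
variable {k : ℕ}

lemma F1a (hk : 1 ≤ k) (m i : ZMod (2 * k)) (h : k ≤ (i - m).val) :
    DD k ((0, m) : Fin 4 × ZMod (2 * k)) (0, i) = DD k (0, m) (1, i) := by
  have p := fz_succ_of_ge hk h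
  simp (config := { decide := true }) only [DD, ldist, ite_true, ite_false]
  omega

lemma F1o (hk : 1 ≤ k) (l : Fin 4) (hl : l ≠ 0) (m i : ZMod (2 * k))
    (h1 : 1 ≤ (i - m).val) (h2 : (i - m).val ≤ k) :
    DD k ((l, m) : Fin 4 × ZMod (2 * k)) (0, i) = DD k (l, m) (1, i) := by
  have p := fz_pred_of_le hk (by omega) h2
  fin_cases l
  · exact absurd rfl hl
  all_goals
    (simp (config := { decide := true }) only [DD, ldist, ite_true, ite_false]; omega)

lemma F2a (hk : 1 ≤ k) (m i : ZMod (2 * k)) (h : (i - m).val < k) :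
    DD k ((0, m) : Fin 4 × ZMod (2 * k)) (0, i + 1) = DD k (0, m) (1, i) := by
  have p := fz_succ_of_lt hk h
  have e : i + 1 - m = (i - m) + 1 := by ring
  simp (config := { decide := true }) only [DD, ldist, ite_true, ite_false, e]
  omega

lemma F2o (hk : 1 ≤ k) (l : Fin 4) (hl : l ≠ 0) (m i : ZMod (2 * k))
    (h : k ≤ (i - m).val) :
    DD k ((l, m) : Fin 4 × ZMod (2 * k)) (0, i + 1) = DD k (l, m) (1, i) := by
  have p := fz_succ_of_ge hk h
  have e : i + 1 - m = (i - m) + 1 := by ring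
  fin_cases l
  · exact absurd rfl hl
  all_goals
    (simp (config := { decide := true }) only [DD, ldist, ite_true, ite_false, e,
      add_sub_cancel_right]; omega)

lemma F3o (hk : 1 ≤ k) (l : Fin 4) (hl : l ≠ 0) (m i : ZMod (2 * k))
    (h : (i - m).val = 0 ∨ (i - m).val = k) :
    DD k ((l, m) : Fin 4 × ZMod (2 * k)) (0, i) = DD k (l, m) (0, i + 1) := by
  have e : i + 1 - m = (i - m) + 1 := by ring
  have facts : (fzn (2 * k) (i - m) = 0) ∨
      (fzn (2 * k) (i - m) = fzn (2 * k) ((i - m) + 1) + 1 ∧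
       fzn (2 * k) (i - m) = fzn (2 * k) ((i - m) - 1) + 1) := by
    rcases h with h | h
    · exact Or.inl (fz_val_zero hk h)
    · exact Or.inr ⟨fz_succ_of_ge hk (by omega), fz_pred_of_le hk (by omega) (by omega)⟩
  fin_cases l
  · exact absurd rfl hl
  all_goals
    (simp (config := { decide := true }) only [DD, ldist, ite_true, ite_false, e,
      add_sub_cancel_right]; omega)

lemma F4a (hk : 1 ≤ k) (m i : ZMod (2 * k)) (h : (i + 1 - m).val = 0 ∨ (i + 1 - m).val = k) :
    DD k ((0, m) : Fin 4 × ZMod (2 * k)) (2, i) = DD k (0, m) (2, i + 1) := by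
  have facts : (fzn (2 * k) (i + 1 - m) = 0) ∨
      (fzn (2 * k) (i + 1 - m) = fzn (2 * k) ((i + 1 - m) + 1) + 1 ∧
       fzn (2 * k) (i + 1 - m) = fzn (2 * k) ((i + 1 - m) - 1) + 1) := by
    rcases h with h | h
    · exact Or.inl (fz_val_zero hk h)
    · exact Or.inr ⟨fz_succ_of_ge hk (by omega), fz_pred_of_le hk (by omega) (by omega)⟩
  have e2 : i - m + 1 = i + 1 - m := by ring
  have e1 : i - m = i + 1 - m - 1 := by ring
  have e3 : i + 1 - m + 1 = (i + 1 - m) + 1 := by ring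
  simp (config := { decide := true }) only [DD, ldist, ite_true, ite_false]
  rw [e2, e1]
  omega
end part1
end SnAux
namespace SnAux
section pair
variable {k : ℕ}

/-- core: covers all layer-combinations except (u nonzero layer, v layer 0) -/
lemma pair_core (hk : 1 ≤ k) (u v : Fin 4 × ZMod (2 * k)) (hcase : u.1 = 0 ∨ v.1 ≠ 0) :
    ∃ x y, (Sn (2 * k)).Adj x y ∧ DD k u x = DD k u y ∧ DD k v x = DD k v y := by
  haveI : NeZero (2 * k) := ⟨by omega⟩
  obtain ⟨l1, m1⟩ := u
  obtain ⟨l2, m2⟩ := v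
  simp only at hcase
  set r := (m2 - m1).val with hr
  have hrlt : r < 2 * k := (m2 - m1).val_lt
  by_cases h1 : l1 = 0
  · subst h1
    by_cases h2 : l2 = 0
    · subst h2
      -- both layer a
      rcases eq_or_ne r k with hrk | hrk
      · -- r = k : use c-layer edge (2, m1 - 1) -- (2, m1)
        refine ⟨(2, m1 - 1), (2, m1), ?_, ?_, ?_⟩
        · have := adj_h hk 2 (m1 - 1)
          rwa [sub_add_cancel] at this
        · have := F4a hk m1 (m1 - 1) (Or.inl (by
            have e : m1 - 1 + 1 - m1 = 0 := by ring
            rw [e, ZMod.val_zero]))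
          have e : m1 - 1 + 1 = m1 := by ring
          rwa [e] at this
        · have := F4a hk m2 (m1 - 1) (Or.inr (by
            have e : m1 - 1 + 1 - m2 = -(m2 - m1) := by ring
            rw [e, val_neg']
            split_ifs <;> omega))
          have e : m1 - 1 + 1 = m1 := by ring
          rwa [e] at this
      · rcases lt_or_gt_of_ne hrk with hlt | hgt
        · -- r < k : edge (a_i, b_i), i = m2 + k
          refine ⟨(0, m2 + (k : ZMod (2 * k))), (1, m2 + (k : ZMod (2 * k))),
            adj_ab hk _, ?_, ?_⟩
          · refine F1a hk m1 _ ?_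
            have e : m2 + (k : ZMod (2 * k)) - m1 = (m2 - m1) + (k : ZMod (2 * k)) := by ring
            rw [e, val_add', kcast_val hk]
            split_ifs <;> omega
          · refine F1a hk m2 _ ?_
            have e : m2 + (k : ZMod (2 * k)) - m2 = (k : ZMod (2 * k)) := by ring
            rw [e, kcast_val hk]
        · -- r > k : edge (a_i, b_i), i = m1 + k
          refine ⟨(0, m1 + (k : ZMod (2 * k))), (1, m1 + (k : ZMod (2 * k))),
            adj_ab hk _, ?_, ?_⟩
          · refine F1a hk m1 _ ?_
            have e : m1 + (k : ZMod (2 * k)) - m1 = (k : ZMod (2 * k)) := by ring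
            rw [e, kcast_val hk]
          · refine F1a hk m2 _ ?_
            have e : m1 + (k : ZMod (2 * k)) - m2 = (k : ZMod (2 * k)) - (m2 - m1) := by ring
            have hneg : (-(m2 - m1)).val = 2 * k - r := by
              rw [val_neg']; split_ifs <;> omega
            rw [e, sub_eq_add_neg, val_add', kcast_val hk, hneg]
            split_ifs <;> omega
    · -- u layer a, v layer ≠ 0
      rcases lt_or_ge r k with hlt | hge
      · -- r < k : edge (a_i, b_i), i = m1 + k
        refine ⟨(0, m1 + (k : ZMod (2 * k))), (1, m1 + (k : ZMod (2 * k))),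
          adj_ab hk _, ?_, ?_⟩
        · refine F1a hk m1 _ ?_
          have e : m1 + (k : ZMod (2 * k)) - m1 = (k : ZMod (2 * k)) := by ring
          rw [e, kcast_val hk]
        · have hneg : (-(m2 - m1)).val = if r = 0 then 0 else 2 * k - r := val_neg' _
          have hcv : (m1 + (k : ZMod (2 * k)) - m2).val = if r = 0 then k else k - r := by
            have e : m1 + (k : ZMod (2 * k)) - m2 = (k : ZMod (2 * k)) + -(m2 - m1) := by
              ring
            rw [e, val_add', kcast_val hk, hneg]
            split_ifs <;> omega
          refine F1o hk l2 h2 m2 _ ?_ ?_ <;> (rw [hcv]; split_ifs <;> omega)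
      · -- r ≥ k : edge (a_{i+1}, b_i), i = m2 + k
        refine ⟨(0, m2 + (k : ZMod (2 * k)) + 1), (1, m2 + (k : ZMod (2 * k))),
          adj_diag hk _, ?_, ?_⟩
        · refine F2a hk m1 _ ?_
          have e : m2 + (k : ZMod (2 * k)) - m1 = (m2 - m1) + (k : ZMod (2 * k)) := by ring
          rw [e, val_add', kcast_val hk]
          split_ifs <;> omega
        · refine F2o hk l2 h2 m2 _ ?_
          have e : m2 + (k : ZMod (2 * k)) - m2 = (k : ZMod (2 * k)) := by ring
          rw [e, kcast_val hk]
  · -- u layer ≠ 0, so v layer ≠ 0 by hcase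
    have h2 : l2 ≠ 0 := by tauto
    rcases eq_or_ne r k with hrk | hrk
    · -- r = k : edge (a_{m1}, a_{m1+1})
      refine ⟨(0, m1), (0, m1 + 1), adj_h hk 0 m1, ?_, ?_⟩
      · exact F3o hk l1 h1 m1 m1 (Or.inl (by rw [sub_self, ZMod.val_zero]))
      · refine F3o hk l2 h2 m2 m1 (Or.inr ?_)
        have e : m1 - m2 = -(m2 - m1) := by ring
        rw [e, val_neg']
        split_ifs <;> omega
    · rcases lt_or_gt_of_ne hrk with hlt | hgt
      · -- r < k : edge (a_i, b_i), i = m2 + 1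
        refine ⟨(0, m2 + 1), (1, m2 + 1), adj_ab hk _, ?_, ?_⟩
        · refine F1o hk l1 h1 m1 _ ?_ ?_ <;>
            (have e : m2 + 1 - m1 = (m2 - m1) + 1 := by ring
             rw [e, val_add', one_val hk]
             split_ifs <;> omega)
        · refine F1o hk l2 h2 m2 _ ?_ ?_ <;>
            (have e : m2 + 1 - m2 = (1 : ZMod (2 * k)) := by ring
             rw [e, one_val hk]
             try omega)
      · -- r > k : edge (a_i, b_i), i = m1 + 1
        refine ⟨(0, m1 + 1), (1, m1 + 1), adj_ab hk _, ?_, ?_⟩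
        · refine F1o hk l1 h1 m1 _ ?_ ?_ <;>
            (have e : m1 + 1 - m1 = (1 : ZMod (2 * k)) := by ring
             rw [e, one_val hk]
             try omega)
        · have hneg : (-(m2 - m1)).val = 2 * k - r := by
            rw [val_neg']; split_ifs <;> omega
          have hcv : (m1 + 1 - m2).val = 2 * k + 1 - r := by
            have e : m1 + 1 - m2 = (1 : ZMod (2 * k)) + -(m2 - m1) := by ring
            rw [e, val_add', one_val hk, hneg]
            split_ifs <;> omega
          refine F1o hk l2 h2 m2 _ ?_ ?_ <;> (rw [hcv] <;> omega)

lemma pair_unresolved (hk : 1 ≤ k) (u v : Fin 4 × ZMod (2 * k)) :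
    ∃ x y, (Sn (2 * k)).Adj x y ∧ DD k u x = DD k u y ∧ DD k v x = DD k v y := by
  by_cases hcase : u.1 = 0 ∨ v.1 ≠ 0
  · exact pair_core hk u v hcase
  · push_neg at hcase
    obtain ⟨x, y, hadj, h1, h2⟩ := pair_core hk v u (Or.inl hcase.2)
    exact ⟨x, y, hadj, h2, h1⟩

end pair
end SnAux
namespace SnAux
section resolve
variable {k : ℕ}

lemma fz_ne_succ (hk : 1 ≤ k) (z : ZMod (2 * k)) :
    fzn (2 * k) z ≠ fzn (2 * k) (z + 1) := by
  rcases lt_or_ge z.val k with h | h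
  · have := fz_succ_of_lt hk h; omega
  · have := fz_succ_of_ge hk h; omega

lemma resolve_rel (hk : 1 ≤ k) (u v : Fin 4 × ZMod (2 * k)) (h : snRel (2 * k) u v) :
    ∃ w : Fin 4 × ZMod (2 * k),
      (w = (0, 0) ∨ w = (0, 1) ∨ w = (1, 0)) ∧ DD k w u ≠ DD k w v := by
  haveI : NeZero (2 * k) := ⟨by omega⟩
  obtain ⟨l1, i⟩ := u
  obtain ⟨l2, j⟩ := v
  rcases h with ⟨h1, h2⟩ | ⟨h1, h2, h3⟩ | ⟨h1, h2, h3⟩ | ⟨h1, h2, h3⟩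
  · -- horizontal edge
    simp only at h1 h2; subst h1; subst h2
    have p := fz_ne_succ hk i
    fin_cases l1
    · exact ⟨(0, 0), Or.inl rfl, by
        simp (config := { decide := true }) only [DD, ldist, ite_true, ite_false, sub_zero]
        omega⟩
    all_goals
      exact ⟨(1, 0), Or.inr (Or.inr rfl), by
        simp (config := { decide := true }) only [DD, ldist, ite_true, ite_false, sub_zero]
        omega⟩
  · -- ab edges : l1 = 0, l2 = 1
    simp only at h1 h2 h3; subst h1; subst h2
    rcases h3 with h3 | h3
    · -- u = (0,j), v = (1,j)
      subst h3
      rcases lt_trichotomy i.val k with hr | hr | hr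
      · refine ⟨(0, 0), Or.inl rfl, ?_⟩
        have p := fz_succ_of_lt hk hr
        simp (config := { decide := true }) only [DD, ldist, ite_true, ite_false, sub_zero]
        omega
      · refine ⟨(0, 1), Or.inr (Or.inl rfl), ?_⟩
        have p := fz_pred_of_le hk (z := i) (by omega) (by omega)
        simp (config := { decide := true }) only [DD, ldist, ite_true, ite_false,
          sub_add_cancel]
        omega
      · refine ⟨(1, 0), Or.inr (Or.inr rfl), ?_⟩
        have p := fz_pred_of_gt hk (z := i) (Or.inl (by omega))
        simp (config := { decide := true }) only [DD, ldist, ite_true, ite_false, sub_zero]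
        omega
    · -- u = (0,j+1), v = (1,j)
      subst h3
      by_cases h0 : j.val = 0
      · refine ⟨(0, 1), Or.inr (Or.inl rfl), ?_⟩
        have p := fz_val_zero hk h0
        simp (config := { decide := true }) only [DD, ldist, ite_true, ite_false,
          add_sub_cancel_right, sub_add_cancel]
        omega
      · rcases lt_or_ge j.val k with hr | hr
        · refine ⟨(1, 0), Or.inr (Or.inr rfl), ?_⟩
          have p := fz_succ_of_lt hk hr
          simp (config := { decide := true }) only [DD, ldist, ite_true, ite_false,
            sub_zero, add_sub_cancel_right]
          omega
        · refine ⟨(0, 0), Or.inl rfl, ?_⟩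
          have p := fz_succ_of_ge hk hr
          simp (config := { decide := true }) only [DD, ldist, ite_true, ite_false, sub_zero]
          omega
  · -- bc edge
    simp only at h1 h2 h3; subst h1; subst h2; subst h3
    refine ⟨(0, 0), Or.inl rfl, ?_⟩
    simp (config := { decide := true }) only [DD, ldist, ite_true, ite_false, sub_zero]
    omega
  · -- cd edge
    simp only at h1 h2 h3; subst h1; subst h2; subst h3
    refine ⟨(0, 0), Or.inl rfl, ?_⟩
    simp (config := { decide := true }) only [DD, ldist, ite_true, ite_false, sub_zero]
    omega

end resolve
end SnAux

def IsLocalResolvingSet {V : Type*} (G : SimpleGraph V) (W : Set V) : Prop :=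
  ∀ u v : V, G.Adj u v → ∃ w ∈ W, G.dist u w ≠ G.dist v w

def IsStrongResolvingSet {V : Type*} (G : SimpleGraph V) (S : Set V) : Prop :=
  ∀ u v : V, u ≠ v → ∃ x ∈ S, G.dist v x = G.dist v u + G.dist u x ∨
    G.dist u x = G.dist u v + G.dist v x

noncomputable def localMetricDim {V : Type*} (G : SimpleGraph V) : ℕ :=
  sInf {k | ∃ W : Finset V, IsLocalResolvingSet G ↑W ∧ W.card = k}

noncomputable def strongMetricDim {V : Type*} (G : SimpleGraph V) : ℕ :=
  sInf {k | ∃ S : Finset V, IsStrongResolvingSet G ↑S ∧ S.card = k}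

theorem lmd_Sn_even (k : ℕ) (hk : 2 ≤ k) :
    (∀ u v : Fin 4 × ZMod (2 * k), ¬ IsLocalResolvingSet (Sn (2 * k)) {u, v}) ∧
    (∃ W : Finset (Fin 4 × ZMod (2 * k)), W.card = 3 ∧
      IsLocalResolvingSet (Sn (2 * k)) ↑W) ∧
    localMetricDim (Sn (2 * k)) = 3 := by
  have hk1 : 1 ≤ k := by omega
  haveI : NeZero (2 * k) := ⟨by omega⟩
  have hD := SnAux.dist_eq (k := k) hk1
  -- part 1
  have hpart1 : ∀ u v : Fin 4 × ZMod (2 * k), ¬ IsLocalResolvingSet (Sn (2 * k)) {u, v} := by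
    intro u v hres
    obtain ⟨x, y, hadj, e1, e2⟩ := SnAux.pair_unresolved hk1 u v
    obtain ⟨w, hw, hne⟩ := hres x y hadj
    apply hne
    have key : ∀ t, SnAux.DD k t x = SnAux.DD k t y →
        (Sn (2 * k)).dist x t = (Sn (2 * k)).dist y t := by
      intro t ht
      rw [SimpleGraph.dist_comm, hD t x, SimpleGraph.dist_comm (u := y), hD t y, ht]
    rcases hw with rfl | hw
    · exact key w e1
    · rw [Set.mem_singleton_iff] at hw
      subst hw
      exact key w e2
  -- part 2
  have h10 : ((0 : ZMod (2 * k))) ≠ 1 := fun e => SnAux.one_ne_zero' hk1 e.symm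
  set W : Finset (Fin 4 × ZMod (2 * k)) := {(0, 0), (0, 1), (1, 0)} with hWdef
  have hWcard : W.card = 3 := by
    rw [hWdef]
    rw [Finset.card_insert_of_notMem (by
      simp only [Finset.mem_insert, Finset.mem_singleton, Prod.mk.injEq, not_or]
      refine ⟨fun h => h10 h.2, fun h => ?_⟩
      have := h.1
      simp at this)]
    rw [Finset.card_insert_of_notMem (by
      simp only [Finset.mem_singleton, Prod.mk.injEq, not_and]
      intro h
      simp at h)]
    rfl
  have hWres : IsLocalResolvingSet (Sn (2 * k)) ↑W := by
    intro a b hab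
    have hmem : ∀ w : Fin 4 × ZMod (2 * k),
        (w = (0, 0) ∨ w = (0, 1) ∨ w = (1, 0)) → w ∈ (W : Set _) := by
      rintro w (rfl | rfl | rfl) <;> simp [hWdef]
    have hdd : ∀ w a' b' : Fin 4 × ZMod (2 * k), SnAux.DD k w a' ≠ SnAux.DD k w b' →
        (Sn (2 * k)).dist a' w ≠ (Sn (2 * k)).dist b' w := by
      intro w a' b' hne he
      apply hne
      rw [SimpleGraph.dist_comm] at he
      rw [SimpleGraph.dist_comm (u := b')] at he
      rwa [hD w a', hD w b'] at he
    have hab2 := hab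
    rw [Sn, SimpleGraph.fromRel_adj] at hab2
    rcases hab2.2 with hr | hr
    · obtain ⟨w, hw, hne⟩ := SnAux.resolve_rel hk1 a b hr
      exact ⟨w, hmem w hw, hdd w a b hne⟩
    · obtain ⟨w, hw, hne⟩ := SnAux.resolve_rel hk1 b a hr
      exact ⟨w, hmem w hw, (hdd w b a hne).symm⟩
  refine ⟨hpart1, ⟨W, hWcard, hWres⟩, ?_⟩
  -- part 3
  have h3mem : 3 ∈ {m | ∃ W : Finset (Fin 4 × ZMod (2 * k)),
      IsLocalResolvingSet (Sn (2 * k)) ↑W ∧ W.card = m} := ⟨W, hWres, hWcard⟩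
  refine le_antisymm (Nat.sInf_le h3mem) (le_csInf ⟨3, h3mem⟩ ?_)
  rintro m ⟨Wm, hWm, rfl⟩
  by_contra hlt
  push_neg at hlt
  obtain ⟨u, v, hsub⟩ : ∃ u v : Fin 4 × ZMod (2 * k), ↑Wm ⊆ ({u, v} : Set _) := by
    rcases Nat.lt_or_ge Wm.card 1 with h | h
    · have he : Wm = ∅ := Finset.card_eq_zero.mp (show Wm.card = 0 by omega)
      exact ⟨(0, 0), (0, 0), by simp [he]⟩
    rcases Nat.lt_or_ge Wm.card 2 with h2 | h2
    · obtain ⟨a, ha⟩ := Finset.card_eq_one.mp (show Wm.card = 1 by omega)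
      exact ⟨a, a, by simp [ha]⟩
    · obtain ⟨a, b, hab', hWab⟩ := Finset.card_eq_two.mp (show Wm.card = 2 by omega)
      exact ⟨a, b, by simp [hWab]⟩
  exact hpart1 u v (fun x y hxy => by
    obtain ⟨w, hwW, hne⟩ := hWm x y hxy
    exact ⟨w, hsub hwW, hne⟩)
end

section
/- For even n = 2k with k ≥ 2, every strong resolving set of S_n has at least 3n/2 elements, and the set {d_1,…,d_n, a_1,…,a_k} is a strong resolving set; hence sdim(S_n) = 3n/2 for even n ≥ 4. -/
open SimpleGraph
section
variable {n : ℕ}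

lemma zval_succ [NeZero n] (hn : 2 ≤ n) (z : ZMod n) :
    ((z + 1).val = z.val + 1 ∧ z.val + 1 < n) ∨ (z.val = n - 1 ∧ (z + 1).val = 0) := by
  have h1 : (1 : ZMod n).val = 1 := ZMod.val_one'' (by omega)
  have hv := ZMod.val_lt z
  have := ZMod.val_add z 1
  rw [h1] at this
  rcases lt_or_ge (z.val + 1) n with h | h
  · left; rw [this, Nat.mod_eq_of_lt h]; exact ⟨rfl, h⟩
  · right
    have : z.val = n - 1 := by omega
    refine ⟨this, ?_⟩
    rw [ZMod.val_add, h1, this]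
    have : n - 1 + 1 = n := by omega
    rw [this, Nat.mod_self]

lemma zval_neg [NeZero n] (z : ZMod n) :
    (z.val = 0 ∧ (-z).val = 0) ∨ (z.val + (-z).val = n) := by
  by_cases h : z = 0
  · left; simp [h]
  · right
    have h1 : z.val ≠ 0 := fun hh => h (by rwa [← ZMod.val_eq_zero])
    have h2 := ZMod.val_add z (-z)
    rw [add_neg_cancel, ZMod.val_zero] at h2
    have hv := ZMod.val_lt z
    have hv2 := ZMod.val_lt (-z)
    have h3 : (-z).val ≠ 0 := by
      intro hh
      rw [ZMod.val_eq_zero] at hh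
      exact h (by rwa [neg_eq_zero] at hh)
    rcases Nat.lt_or_ge (z.val + (-z).val) n with h4 | h4
    · rw [Nat.mod_eq_of_lt h4] at h2; omega
    · have : z.val + (-z).val - n < n := by omega
      have h5 : (z.val + (-z).val) % n = z.val + (-z).val - n := by
        rw [Nat.mod_eq_sub_mod h4, Nat.mod_eq_of_lt this]
      omega

lemma zval_zero_iff [NeZero n] (a b : ZMod n) : (b - a).val = 0 ↔ b = a := by
  rw [ZMod.val_eq_zero, sub_eq_zero]

/-- Claimed distance function for `Sn n`. -/
def Df (n : ℕ) (u v : Fin 4 × ZMod n) : ℕ :=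
  if u.1.val = 0 then
    if v.1.val = 0 then min (v.2 - u.2).val (n - (v.2 - u.2).val)
    else min ((v.2 - u.2).val + v.1.val) (n - (v.2 - u.2).val + v.1.val - 1)
  else if v.1.val = 0 then
    min ((u.2 - v.2).val + u.1.val) (n - (u.2 - v.2).val + u.1.val - 1)
  else
    min (v.2 - u.2).val (n - (v.2 - u.2).val) +
      (if u.1.val ≤ v.1.val then v.1.val - u.1.val else u.1.val - v.1.val)

lemma Df_self (u : Fin 4 × ZMod n) : Df n u u = 0 := by
  by_cases h : u.1.val = 0 <;> simp [Df, h, sub_self]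


lemma sn_adj {x y : Fin 4 × ZMod n} :
    (Sn n).Adj x y ↔ x ≠ y ∧ (snRel n x y ∨ snRel n y x) := SimpleGraph.fromRel_adj _ x y

lemma zmod_one_ne_zero (hn : 2 ≤ n) : (1 : ZMod n) ≠ 0 := by
  intro h
  haveI : NeZero n := ⟨by omega⟩
  have h1 : (1 : ZMod n).val = 1 := ZMod.val_one'' (by omega)
  rw [h, ZMod.val_zero] at h1
  exact absurd h1.symm one_ne_zero

lemma adj_cyc (hn : 2 ≤ n) (l : Fin 4) (i : ZMod n) : (Sn n).Adj (l, i) (l, i + 1) := by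
  rw [sn_adj]
  refine ⟨?_, Or.inl (Or.inl ⟨rfl, rfl⟩)⟩
  intro h
  have : i = i + 1 := congrArg Prod.snd h
  exact zmod_one_ne_zero hn (by linear_combination -this)

lemma adj_ab (i : ZMod n) : (Sn n).Adj (0, i) (1, i) := by
  rw [sn_adj]
  exact ⟨by simp, Or.inl (Or.inr (Or.inl ⟨rfl, rfl, Or.inl rfl⟩))⟩

lemma adj_ab' (i : ZMod n) : (Sn n).Adj (0, i + 1) (1, i) := by
  rw [sn_adj]
  exact ⟨by simp, Or.inl (Or.inr (Or.inl ⟨rfl, rfl, Or.inr rfl⟩))⟩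

lemma adj_bc (i : ZMod n) : (Sn n).Adj (1, i) (2, i) := by
  rw [sn_adj]
  exact ⟨by simp, Or.inl (Or.inr (Or.inr (Or.inl ⟨rfl, rfl, rfl⟩)))⟩

lemma adj_cd (i : ZMod n) : (Sn n).Adj (2, i) (3, i) := by
  rw [sn_adj]
  exact ⟨by simp, Or.inl (Or.inr (Or.inr (Or.inr ⟨rfl, rfl, rfl⟩)))⟩

lemma walk_fwd (hn : 2 ≤ n) (l : Fin 4) (s : ℕ) :
    ∀ i : ZMod n, ∃ w : (Sn n).Walk (l, i) (l, i + (s : ZMod n)), w.length = s := by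
  induction s with
  | zero => intro i; exact ⟨SimpleGraph.Walk.nil.copy rfl (by simp), by simp⟩
  | succ s ih =>
    intro i
    obtain ⟨w, hw⟩ := ih (i + 1)
    refine ⟨(SimpleGraph.Walk.cons (adj_cyc hn l i) w).copy rfl (by push_cast; ring_nf), by simp [hw]⟩

lemma walk_bwd (hn : 2 ≤ n) (l : Fin 4) (s : ℕ) :
    ∀ i : ZMod n, ∃ w : (Sn n).Walk (l, i) (l, i - (s : ZMod n)), w.length = s := by
  induction s with
  | zero => intro i; exact ⟨SimpleGraph.Walk.nil.copy rfl (by simp), by simp⟩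
  | succ s ih =>
    intro i
    obtain ⟨w, hw⟩ := ih (i - 1)
    have ha : (Sn n).Adj (l, i) (l, i - 1) := by
      have := (adj_cyc hn l (i - 1)).symm
      simpa using this
    refine ⟨(SimpleGraph.Walk.cons ha w).copy rfl (by push_cast; ring_nf), by simp [hw]⟩

lemma walk_vert (l m : Fin 4) (i : ZMod n) :
    ∃ w : (Sn n).Walk (l, i) (m, i), w.length = max l.val m.val - min l.val m.val := by
  have hab := adj_ab (n := n) i
  have hbc := adj_bc (n := n) i
  have hcd := adj_cd (n := n) i
  fin_cases l <;> fin_cases m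
  · exact ⟨.nil, rfl⟩
  · exact ⟨.cons hab .nil, rfl⟩
  · exact ⟨.cons hab (.cons hbc .nil), rfl⟩
  · exact ⟨.cons hab (.cons hbc (.cons hcd .nil)), rfl⟩
  · exact ⟨.cons hab.symm .nil, rfl⟩
  · exact ⟨.nil, rfl⟩
  · exact ⟨.cons hbc .nil, rfl⟩
  · exact ⟨.cons hbc (.cons hcd .nil), rfl⟩
  · exact ⟨.cons hbc.symm (.cons hab.symm .nil), rfl⟩
  · exact ⟨.cons hbc.symm .nil, rfl⟩
  · exact ⟨.nil, rfl⟩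
  · exact ⟨.cons hcd .nil, rfl⟩
  · exact ⟨.cons hcd.symm (.cons hbc.symm (.cons hab.symm .nil)), rfl⟩
  · exact ⟨.cons hcd.symm (.cons hbc.symm .nil), rfl⟩
  · exact ⟨.cons hcd.symm .nil, rfl⟩
  · exact ⟨.nil, rfl⟩

end

lemma dist_le_fwd (hn : 2 ≤ n) [NeZero n] (l m : Fin 4) (i j : ZMod n) :
    (Sn n).dist (l, i) (m, j) ≤ (j - i).val + (max l.val m.val - min l.val m.val) := by
  obtain ⟨w1, hw1⟩ := walk_fwd hn l ((j - i).val) i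
  obtain ⟨w2, hw2⟩ := walk_vert (n := n) l m j
  have hcast : i + (((j - i).val : ℕ) : ZMod n) = j := by
    rw [ZMod.natCast_zmod_val]; ring
  calc (Sn n).dist (l, i) (m, j) ≤ ((w1.copy rfl (by rw [hcast])).append w2).length :=
        SimpleGraph.dist_le _
    _ = _ := by simp [hw1, hw2]

lemma dist_le_bwd (hn : 2 ≤ n) [NeZero n] (l m : Fin 4) (i j : ZMod n) :
    (Sn n).dist (l, i) (m, j) ≤ (n - (j - i).val) + (max l.val m.val - min l.val m.val) := by
  obtain ⟨w1, hw1⟩ := walk_bwd hn l (n - (j - i).val) i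
  obtain ⟨w2, hw2⟩ := walk_vert (n := n) l m j
  have hle : (j - i).val ≤ n := (ZMod.val_lt _).le
  have hcast : i - (((n - (j - i).val : ℕ)) : ZMod n) = j := by
    have h1 : ((n - (j - i).val : ℕ) : ZMod n) = - (((j - i).val : ℕ) : ZMod n) := by
      have : ((n - (j - i).val : ℕ) : ZMod n) + (((j - i).val : ℕ) : ZMod n) = ((n : ℕ) : ZMod n) := by
        rw [← Nat.cast_add]; congr 1; omega
      rw [ZMod.natCast_self] at this
      linear_combination this
    rw [h1, ZMod.natCast_zmod_val]; ring
  calc (Sn n).dist (l, i) (m, j) ≤ ((w1.copy rfl (by rw [hcast])).append w2).length :=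
        SimpleGraph.dist_le _
    _ = _ := by simp [hw1, hw2]

lemma dist_le_diag (hn : 2 ≤ n) [NeZero n] (m : Fin 4) (hm : 1 ≤ m.val) (i j : ZMod n) :
    (Sn n).dist (0, i) (m, j) ≤ n - (j - i).val + m.val - 1 := by
  obtain ⟨w1, hw1⟩ := walk_bwd hn 0 (n - (j - i).val - 1) i
  obtain ⟨w2, hw2⟩ := walk_vert (n := n) 1 m j
  have hlt : (j - i).val < n := ZMod.val_lt _
  have hcast : i - (((n - (j - i).val - 1 : ℕ)) : ZMod n) = j + 1 := by
    have h0 : (((n - (j - i).val - 1) + ((j - i).val + 1) : ℕ) : ZMod n) = 0 := by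
      rw [show (n - (j - i).val - 1) + ((j - i).val + 1) = n from by omega, ZMod.natCast_self]
    push_cast at h0
    rw [ZMod.natCast_zmod_val] at h0
    linear_combination -h0
  calc (Sn n).dist (0, i) (m, j)
      ≤ (((w1.copy rfl (by rw [hcast])).append
          (SimpleGraph.Walk.cons (adj_ab' j) SimpleGraph.Walk.nil)).append w2).length :=
        SimpleGraph.dist_le _
    _ = _ := by
      simp [hw1, hw2]
      omega

lemma sn_reachable (hn : 2 ≤ n) [NeZero n] (u v : Fin 4 × ZMod n) : (Sn n).Reachable u v := by
  obtain ⟨w1, _⟩ := walk_fwd hn u.1 ((v.2 - u.2).val) u.2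
  obtain ⟨w2, _⟩ := walk_vert (n := n) u.1 v.1 v.2
  have hcast : u.2 + (((v.2 - u.2).val : ℕ) : ZMod n) = v.2 := by
    rw [ZMod.natCast_zmod_val]; ring
  exact ⟨((w1.copy rfl (by rw [hcast])).append w2).copy (by simp) (by simp)⟩

lemma sn_connected (hn : 2 ≤ n) [NeZero n] : (Sn n).Connected :=
  SimpleGraph.Connected.mk (sn_reachable hn)

lemma dist_le_Df (hn : 2 ≤ n) [NeZero n] (u v : Fin 4 × ZMod n) :
    (Sn n).dist u v ≤ Df n u v := by
  obtain ⟨l, i⟩ := u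
  obtain ⟨m, j⟩ := v
  have hl4 := l.isLt
  have hm4 := m.isLt
  have hsn : (j - i).val < n := ZMod.val_lt _
  have htn : (i - j).val < n := ZMod.val_lt _
  by_cases h1 : l.val = 0
  · by_cases h2 : m.val = 0
    · have hA := dist_le_fwd hn l m i j
      have hB := dist_le_bwd hn l m i j
      unfold Df
      dsimp only
      rw [if_pos h1, if_pos h2]
      omega
    · have hl0 : l = 0 := Fin.ext (by simpa using h1)
      subst hl0
      have hA := dist_le_fwd hn 0 m i j
      have hC := dist_le_diag hn m (by omega) i j
      unfold Df
      dsimp only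
      rw [if_pos h1, if_neg h2]
      simp only [Fin.val_zero] at hA ⊢
      omega
  · by_cases h2 : m.val = 0
    · have hm0 : m = 0 := Fin.ext (by simpa using h2)
      subst hm0
      rw [SimpleGraph.dist_comm]
      have hA := dist_le_fwd hn 0 l j i
      have hC := dist_le_diag hn l (by omega) j i
      unfold Df
      dsimp only
      rw [if_neg h1, if_pos h2]
      simp only [Fin.val_zero] at hA ⊢
      omega
    · have hA := dist_le_fwd hn l m i j
      have hB := dist_le_bwd hn l m i j
      unfold Df
      dsimp only
      rw [if_neg h1, if_neg h2]
      split_ifs <;> omega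

section lip
variable {n : ℕ}

lemma lip_rel (hn : 4 ≤ n) [NeZero n] (v x y : Fin 4 × ZMod n) (h : snRel n x y) :
    Df n x v ≤ Df n y v + 1 ∧ Df n y v ≤ Df n x v + 1 := by
  obtain ⟨mv, j⟩ := v
  obtain ⟨lx, ix⟩ := x
  obtain ⟨ly, iy⟩ := y
  have hm4 := mv.isLt
  have hn2 : 2 ≤ n := by omega
  have h2 : ((2:Fin 4)).val = 2 := rfl
  have h3 : ((3:Fin 4)).val = 3 := rfl
  rcases h with ⟨hl, hi⟩ | ⟨hlx, hly, hii⟩ | ⟨hlx, hly, hii⟩ | ⟨hlx, hly, hii⟩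
  · -- cycle edge, iy = ix + 1
    dsimp only at hl hi
    subst hl hi
    have e1 : j - (ix + 1) = j - ix - 1 := by ring
    have hz := zval_succ hn2 (j - ix - 1)
    rw [show j - ix - 1 + 1 = j - ix from by ring] at hz
    have hw := zval_succ hn2 (ix - j)
    rw [show ix - j + 1 = ix + 1 - j from by ring] at hw
    have hg1 := zval_neg (j - ix)
    rw [show -(j - ix) = ix - j from by ring] at hg1
    have hg2 := zval_neg (j - ix - 1)
    rw [show -(j - ix - 1) = ix + 1 - j from by ring] at hg2
    have v1 : (j - ix).val < n := ZMod.val_lt _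
    have v2 : (j - ix - 1).val < n := ZMod.val_lt _
    have v3 : (ix - j).val < n := ZMod.val_lt _
    have v4 : (ix + 1 - j).val < n := ZMod.val_lt _
    unfold Df
    dsimp only
    rw [e1]
    split_ifs <;> omega
  · -- a-b edges
    dsimp only at hlx hly hii
    subst hlx hly
    rcases hii with hii | hii
    · subst hii
      have hg1 := zval_neg (j - ix)
      rw [show -(j - ix) = ix - j from by ring] at hg1
      have v1 : (j - ix).val < n := ZMod.val_lt _
      have v3 : (ix - j).val < n := ZMod.val_lt _
      unfold Df
      dsimp only
      simp only [Fin.val_zero, Fin.val_one, h2, h3]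
      split_ifs <;> omega
    · subst hii
      -- x = (0, iy + 1), y = (1, iy)
      have e1 : j - (iy + 1) = j - iy - 1 := by ring
      have hz := zval_succ hn2 (j - iy - 1)
      rw [show j - iy - 1 + 1 = j - iy from by ring] at hz
      have hw := zval_succ hn2 (iy - j)
      rw [show iy - j + 1 = iy + 1 - j from by ring] at hw
      have hg1 := zval_neg (j - iy)
      rw [show -(j - iy) = iy - j from by ring] at hg1
      have hg2 := zval_neg (j - iy - 1)
      rw [show -(j - iy - 1) = iy + 1 - j from by ring] at hg2
      have v1 : (j - iy).val < n := ZMod.val_lt _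
      have v2 : (j - iy - 1).val < n := ZMod.val_lt _
      have v3 : (iy - j).val < n := ZMod.val_lt _
      have v4 : (iy + 1 - j).val < n := ZMod.val_lt _
      unfold Df
      dsimp only
      rw [e1]
      simp only [Fin.val_zero, Fin.val_one, h2, h3]
      split_ifs <;> omega
  · -- b-c edge
    dsimp only at hlx hly hii
    subst hlx hly hii
    have hg1 := zval_neg (j - ix)
    rw [show -(j - ix) = ix - j from by ring] at hg1
    have v1 : (j - ix).val < n := ZMod.val_lt _
    have v3 : (ix - j).val < n := ZMod.val_lt _
    unfold Df
    dsimp only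
    simp only [Fin.val_zero, Fin.val_one, h2, h3]
    split_ifs <;> omega
  · -- c-d edge
    dsimp only at hlx hly hii
    subst hlx hly hii
    have hg1 := zval_neg (j - ix)
    rw [show -(j - ix) = ix - j from by ring] at hg1
    have v1 : (j - ix).val < n := ZMod.val_lt _
    have v3 : (ix - j).val < n := ZMod.val_lt _
    unfold Df
    dsimp only
    simp only [Fin.val_zero, Fin.val_one, h2, h3]
    split_ifs <;> omega

end lip

section eq
variable {n : ℕ}

lemma Df_le_length (hn : 4 ≤ n) [NeZero n] (v : Fin 4 × ZMod n) :
    ∀ {u : Fin 4 × ZMod n} (w : (Sn n).Walk u v), Df n u v ≤ w.length := by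
  intro u w
  induction w with
  | nil => simp [Df_self]
  | @cons a b vv h p ih =>
    have hab : Df n a vv ≤ Df n b vv + 1 := by
      rw [sn_adj] at h
      rcases h.2 with h' | h'
      · exact (lip_rel hn vv a b h').1
      · exact (lip_rel hn vv b a h').2
    rw [SimpleGraph.Walk.length_cons]
    omega

lemma dist_eq_Df (hn : 4 ≤ n) [NeZero n] (u v : Fin 4 × ZMod n) :
    (Sn n).dist u v = Df n u v := by
  refine le_antisymm (dist_le_Df (by omega) u v) ?_
  obtain ⟨w, hw⟩ := (sn_reachable (by omega) u v).exists_walk_length_eq_dist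
  rw [← hw]
  exact Df_le_length hn v w

lemma Df_pos (hn : 4 ≤ n) [NeZero n] {u v : Fin 4 × ZMod n} (huv : u ≠ v) :
    1 ≤ Df n u v := by
  rw [← dist_eq_Df hn]
  exact (sn_reachable (by omega) u v).pos_dist_of_ne huv

end eq

section part2
variable {k : ℕ}

lemma strong_resolve (hk : 2 ≤ k) :
    IsStrongResolvingSet (Sn (2 * k))
      ({p : Fin 4 × ZMod (2 * k) | p.1 = 3} ∪
       {p : Fin 4 × ZMod (2 * k) | p.1 = 0 ∧
          ∃ i : ℕ, 1 ≤ i ∧ i ≤ k ∧ p.2 = (i : ZMod (2 * k))}) := by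
  haveI : NeZero (2 * k) := ⟨by omega⟩
  have hn : 4 ≤ 2 * k := by omega
  have hd : ∀ a b : Fin 4 × ZMod (2 * k), (Sn (2 * k)).dist a b = Df (2 * k) a b := dist_eq_Df hn
  intro u v huv
  obtain ⟨lu, i⟩ := u
  obtain ⟨lv, j⟩ := v
  have hlu4 := lu.isLt
  have hlv4 := lv.isLt
  have h2f : ((2:Fin 4)).val = 2 := rfl
  have h3f : ((3:Fin 4)).val = 3 := rfl
  have v1 : (j - i).val < 2 * k := ZMod.val_lt _
  have v2 : (i - j).val < 2 * k := ZMod.val_lt _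
  have hg1 := zval_neg (j - i)
  rw [show -(j - i) = i - j from by ring] at hg1
  by_cases hA : lv.val ≠ 0 ∧ (lu.val = 0 ∨ lu.val ≤ lv.val)
  · refine ⟨(3, j), Or.inl rfl, Or.inr ?_⟩
    simp only [hd]
    unfold Df
    dsimp only
    simp only [h3f, sub_self, ZMod.val_zero]
    split_ifs <;> first | exact (‹False›).elim | omega
  · by_cases hB : lu.val ≠ 0 ∧ (lv.val = 0 ∨ lv.val ≤ lu.val)
    · refine ⟨(3, i), Or.inl rfl, Or.inl ?_⟩
      simp only [hd]
      unfold Df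
      dsimp only
      simp only [h3f, sub_self, ZMod.val_zero]
      split_ifs <;> first | exact (‹False›).elim | omega
    · -- both a-layer
      have hlu0 : lu.val = 0 := by omega
      have hlv0 : lv.val = 0 := by omega
      have hlu : lu = 0 := Fin.ext (by simpa using hlu0)
      have hlv : lv = 0 := Fin.ext (by simpa using hlv0)
      subst hlu hlv
      have hij : i ≠ j := by
        intro h; exact huv (by rw [h])
      have hs0 : (j - i).val ≠ 0 := by
        intro h; exact hij ((zval_zero_iff i j).mp h).symm
      rcases lt_trichotomy ((j - i).val) k with hs | hs | hs
      · refine ⟨(3, j), Or.inl rfl, Or.inr ?_⟩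
        simp only [hd]
        unfold Df
        dsimp only
        simp only [h3f, sub_self, ZMod.val_zero]
        split_ifs <;> first | exact (‹False›).elim | omega
      · -- antipodal
        by_cases hi : 1 ≤ i.val ∧ i.val ≤ k
        · refine ⟨(0, i), Or.inr ⟨rfl, i.val, hi.1, hi.2, (ZMod.natCast_zmod_val i).symm⟩, Or.inl ?_⟩
          simp only [hd, Df_self]
          omega
        · have hj : 1 ≤ j.val ∧ j.val ≤ k := by
            have hji : j = i + ((k : ℕ) : ZMod (2 * k)) := by
              have h1 : ((((j - i).val : ℕ)) : ZMod (2 * k)) = (((k:ℕ)) : ZMod (2 * k)) := by rw [hs]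
              rw [ZMod.natCast_zmod_val] at h1
              linear_combination h1
            have hkv : (((k:ℕ)) : ZMod (2 * k)).val = k := ZMod.val_cast_of_lt (by omega)
            have hiv := ZMod.val_lt i
            rcases Nat.lt_or_ge (i.val + (((k:ℕ)) : ZMod (2 * k)).val) (2 * k) with hlt | hge
            · have := ZMod.val_add_of_lt hlt
              rw [← hji] at this
              omega
            · have := ZMod.val_add_of_le hge
              rw [← hji] at this
              rw [hkv] at this hge
              omega
          refine ⟨(0, j), Or.inr ⟨rfl, j.val, hj.1, hj.2, (ZMod.natCast_zmod_val j).symm⟩, Or.inr ?_⟩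
          simp only [hd, Df_self]
          omega
      · refine ⟨(3, i), Or.inl rfl, Or.inl ?_⟩
        simp only [hd]
        unfold Df
        dsimp only
        simp only [h3f, sub_self, ZMod.val_zero]
        split_ifs <;> first | exact (‹False›).elim | omega

end part2

section part1
variable {n : ℕ}

lemma mmd_mem (hn : 4 ≤ n) [NeZero n] {S : Set (Fin 4 × ZMod n)}
    (hS : IsStrongResolvingSet (Sn n) S) {u v : Fin 4 × ZMod n} (huv : u ≠ v)
    (h1 : ∀ w, (Sn n).Adj u w → (Sn n).dist v w ≤ (Sn n).dist v u)
    (h2 : ∀ w, (Sn n).Adj v w → (Sn n).dist u w ≤ (Sn n).dist u v) :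
    u ∈ S ∨ v ∈ S := by
  have hn2 : 2 ≤ n := by omega
  obtain ⟨x, hxS, hx | hx⟩ := hS u v huv
  · left
    by_cases hxu : x = u
    · rwa [hxu] at hxS
    · exfalso
      have hpos : 0 < (Sn n).dist u x :=
        (sn_reachable hn2 u x).pos_dist_of_ne (fun h => hxu h.symm)
      obtain ⟨w, hw⟩ := (sn_reachable hn2 u x).exists_walk_length_eq_dist
      cases w with
      | nil => simp at hw; omega
      | @cons _ b _ h p =>
        have hd1 : (Sn n).dist b x ≤ p.length := SimpleGraph.dist_le p
        have htri : (Sn n).dist v x ≤ (Sn n).dist v b + (Sn n).dist b x :=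
          (sn_connected hn2).dist_triangle
        have hvb := h1 b h
        simp only [SimpleGraph.Walk.length_cons] at hw
        omega
  · right
    by_cases hxv : x = v
    · rwa [hxv] at hxS
    · exfalso
      have hpos : 0 < (Sn n).dist v x :=
        (sn_reachable hn2 v x).pos_dist_of_ne (fun h => hxv h.symm)
      obtain ⟨w, hw⟩ := (sn_reachable hn2 v x).exists_walk_length_eq_dist
      cases w with
      | nil => simp at hw; omega
      | @cons _ b _ h p =>
        have hd1 : (Sn n).dist b x ≤ p.length := SimpleGraph.dist_le p
        have htri : (Sn n).dist u x ≤ (Sn n).dist u b + (Sn n).dist b x :=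
          (sn_connected hn2).dist_triangle
        have hub := h2 b h
        simp only [SimpleGraph.Walk.length_cons] at hw
        omega

lemma adj_layers {x w : Fin 4 × ZMod n} (h : (Sn n).Adj x w) :
    w.1 = x.1 ∨ (x.1 = 0 ∧ w.1 = 1) ∨ (x.1 = 1 ∧ w.1 = 0) ∨ (x.1 = 1 ∧ w.1 = 2) ∨
      (x.1 = 2 ∧ w.1 = 1) ∨ (x.1 = 2 ∧ w.1 = 3) ∨ (x.1 = 3 ∧ w.1 = 2) := by
  rw [sn_adj] at h
  rcases h.2 with (⟨h1, _⟩ | ⟨h1, h2, _⟩ | ⟨h1, h2, _⟩ | ⟨h1, h2, _⟩) |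
    (⟨h1, _⟩ | ⟨h1, h2, _⟩ | ⟨h1, h2, _⟩ | ⟨h1, h2, _⟩)
  · exact Or.inl h1.symm
  · exact Or.inr (Or.inl ⟨h1, h2⟩)
  · exact Or.inr (Or.inr (Or.inr (Or.inl ⟨h1, h2⟩)))
  · exact Or.inr (Or.inr (Or.inr (Or.inr (Or.inr (Or.inl ⟨h1, h2⟩)))))
  · exact Or.inl h1
  · exact Or.inr (Or.inr (Or.inl ⟨h2, h1⟩))
  · exact Or.inr (Or.inr (Or.inr (Or.inr (Or.inl ⟨h2, h1⟩))))
  · exact Or.inr (Or.inr (Or.inr (Or.inr (Or.inr (Or.inr ⟨h2, h1⟩)))))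

end part1

section pairs
variable {k : ℕ}

lemma Df_le_from3 (hk : 2 ≤ k) (z : ZMod (2 * k)) (w : Fin 4 × ZMod (2 * k)) (hw : w.1.val ≤ 2) :
    Df (2 * k) ((3 : Fin 4), z) w ≤ k + 2 := by
  haveI : NeZero (2 * k) := ⟨by omega⟩
  obtain ⟨lw, x⟩ := w
  have v1 : (x - z).val < 2 * k := ZMod.val_lt _
  have v2 : (z - x).val < 2 * k := ZMod.val_lt _
  have h3f : ((3 : Fin 4)).val = 3 := rfl
  unfold Df
  dsimp only
  simp only [h3f] at *
  split_ifs <;> omega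

lemma Df_le_from1 (hk : 2 ≤ k) (z : ZMod (2 * k)) (w : Fin 4 × ZMod (2 * k)) (hw : 2 ≤ w.1.val) :
    Df (2 * k) ((1 : Fin 4), z) w ≤ k + 2 := by
  haveI : NeZero (2 * k) := ⟨by omega⟩
  obtain ⟨lw, x⟩ := w
  have v1 : (x - z).val < 2 * k := ZMod.val_lt _
  have v2 : (z - x).val < 2 * k := ZMod.val_lt _
  have hl4 := lw.isLt
  unfold Df
  dsimp only
  simp only [Fin.val_one] at *
  split_ifs <;> omega

lemma Df_le_from0 (hk : 2 ≤ k) (z : ZMod (2 * k)) (w : Fin 4 × ZMod (2 * k)) (hw : w.1.val ≤ 1) :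
    Df (2 * k) ((0 : Fin 4), z) w ≤ k := by
  haveI : NeZero (2 * k) := ⟨by omega⟩
  obtain ⟨lw, x⟩ := w
  have v1 : (x - z).val < 2 * k := ZMod.val_lt _
  have v2 : (z - x).val < 2 * k := ZMod.val_lt _
  unfold Df
  dsimp only
  simp only [Fin.val_zero] at *
  split_ifs <;> omega

lemma neg_k_eq (hk : 2 ≤ k) : -(((k : ℕ)) : ZMod (2 * k)) = ((k : ℕ) : ZMod (2 * k)) := by
  have h0 : (((2 * k : ℕ)) : ZMod (2 * k)) = 0 := ZMod.natCast_self _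
  push_cast at h0
  linear_combination -h0

lemma val_k (hk : 2 ≤ k) : (((k : ℕ)) : ZMod (2 * k)).val = k :=
  haveI : NeZero (2 * k) := ⟨by omega⟩
  ZMod.val_cast_of_lt (by omega)

lemma Df_bd_val1 (hk : 2 ≤ k) (i : ZMod (2 * k)) :
    Df (2 * k) ((3 : Fin 4), i + ((k : ℕ) : ZMod (2 * k))) ((1 : Fin 4), i) = k + 2 := by
  haveI : NeZero (2 * k) := ⟨by omega⟩
  unfold Df
  dsimp only
  rw [show i - (i + ((k : ℕ) : ZMod (2 * k))) = -((k : ℕ) : ZMod (2 * k)) from by ring,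
    neg_k_eq hk, val_k hk]
  simp only [show ((3:Fin 4)).val = 3 from rfl, show ((1:Fin 4)).val = 1 from rfl,
    show ((2:Fin 4)).val = 2 from rfl, show ((0:Fin 4)).val = 0 from rfl]
  split_ifs <;> first | exact (‹False›).elim | omega

lemma Df_bd_val2 (hk : 2 ≤ k) (i : ZMod (2 * k)) :
    Df (2 * k) ((1 : Fin 4), i) ((3 : Fin 4), i + ((k : ℕ) : ZMod (2 * k))) = k + 2 := by
  haveI : NeZero (2 * k) := ⟨by omega⟩
  unfold Df
  dsimp only
  rw [show (i + ((k : ℕ) : ZMod (2 * k))) - i = ((k : ℕ) : ZMod (2 * k)) from by ring, val_k hk]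
  simp only [show ((3:Fin 4)).val = 3 from rfl, show ((1:Fin 4)).val = 1 from rfl,
    show ((2:Fin 4)).val = 2 from rfl, show ((0:Fin 4)).val = 0 from rfl]
  split_ifs <;> first | exact (‹False›).elim | omega

lemma Df_aa_val1 (hk : 2 ≤ k) (i : ZMod (2 * k)) :
    Df (2 * k) ((0 : Fin 4), i + ((k : ℕ) : ZMod (2 * k))) ((0 : Fin 4), i) = k := by
  haveI : NeZero (2 * k) := ⟨by omega⟩
  unfold Df
  dsimp only
  rw [show i - (i + ((k : ℕ) : ZMod (2 * k))) = -((k : ℕ) : ZMod (2 * k)) from by ring,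
    neg_k_eq hk, val_k hk]
  simp only [show ((3:Fin 4)).val = 3 from rfl, show ((1:Fin 4)).val = 1 from rfl,
    show ((2:Fin 4)).val = 2 from rfl, show ((0:Fin 4)).val = 0 from rfl]
  split_ifs <;> first | exact (‹False›).elim | omega

lemma Df_aa_val2 (hk : 2 ≤ k) (i : ZMod (2 * k)) :
    Df (2 * k) ((0 : Fin 4), i) ((0 : Fin 4), i + ((k : ℕ) : ZMod (2 * k))) = k := by
  haveI : NeZero (2 * k) := ⟨by omega⟩
  unfold Df
  dsimp only
  rw [show (i + ((k : ℕ) : ZMod (2 * k))) - i = ((k : ℕ) : ZMod (2 * k)) from by ring, val_k hk]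
  simp only [show ((3:Fin 4)).val = 3 from rfl, show ((1:Fin 4)).val = 1 from rfl,
    show ((2:Fin 4)).val = 2 from rfl, show ((0:Fin 4)).val = 0 from rfl]
  split_ifs <;> first | exact (‹False›).elim | omega

lemma pair_bd (hk : 2 ≤ k) {S : Set (Fin 4 × ZMod (2 * k))}
    (hS : IsStrongResolvingSet (Sn (2 * k)) S) (i : ZMod (2 * k)) :
    ((1 : Fin 4), i) ∈ S ∨ ((3 : Fin 4), i + ((k : ℕ) : ZMod (2 * k))) ∈ S := by
  haveI : NeZero (2 * k) := ⟨by omega⟩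
  have hn : 4 ≤ 2 * k := by omega
  refine mmd_mem hn hS ?_ ?_ ?_
  · intro h
    have h1 : ((1 : Fin 4)) = ((3 : Fin 4)) := congrArg Prod.fst h
    exact absurd h1 (by decide)
  · intro w hw
    have hl := adj_layers hw
    dsimp only at hl
    have hw2 : w.1.val ≤ 2 := by
      rcases hl with h | ⟨h, h'⟩ | ⟨h, h'⟩ | ⟨h, h'⟩ | ⟨h, h'⟩ | ⟨h, h'⟩ | ⟨h, h'⟩
      · rw [h]; decide
      · exact absurd h (by decide)
      · rw [h']; decide
      · rw [h']; decide
      · exact absurd h (by decide)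
      · exact absurd h (by decide)
      · exact absurd h (by decide)
    rw [dist_eq_Df hn, dist_eq_Df hn, Df_bd_val1 hk]
    exact Df_le_from3 hk _ w hw2
  · intro w hw
    have hl := adj_layers hw
    dsimp only at hl
    have hw2 : 2 ≤ w.1.val := by
      rcases hl with h | ⟨h, h'⟩ | ⟨h, h'⟩ | ⟨h, h'⟩ | ⟨h, h'⟩ | ⟨h, h'⟩ | ⟨h, h'⟩
      · rw [h]; decide
      · exact absurd h (by decide)
      · exact absurd h (by decide)
      · exact absurd h (by decide)
      · exact absurd h (by decide)
      · exact absurd h (by decide)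
      · rw [h']; decide
    rw [dist_eq_Df hn, dist_eq_Df hn, Df_bd_val2 hk]
    exact Df_le_from1 hk _ w hw2

lemma pair_aa (hk : 2 ≤ k) {S : Set (Fin 4 × ZMod (2 * k))}
    (hS : IsStrongResolvingSet (Sn (2 * k)) S) (i : ZMod (2 * k)) :
    ((0 : Fin 4), i) ∈ S ∨ ((0 : Fin 4), i + ((k : ℕ) : ZMod (2 * k))) ∈ S := by
  haveI : NeZero (2 * k) := ⟨by omega⟩
  have hn : 4 ≤ 2 * k := by omega
  refine mmd_mem hn hS ?_ ?_ ?_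
  · intro h
    have h2 := congrArg Prod.snd h
    dsimp only at h2
    have : ((k : ℕ) : ZMod (2 * k)) = 0 := by linear_combination -h2
    have := congrArg ZMod.val this
    rw [val_k hk, ZMod.val_zero] at this
    omega
  · intro w hw
    have hl := adj_layers hw
    dsimp only at hl
    have hw2 : w.1.val ≤ 1 := by
      rcases hl with h | ⟨h, h'⟩ | ⟨h, h'⟩ | ⟨h, h'⟩ | ⟨h, h'⟩ | ⟨h, h'⟩ | ⟨h, h'⟩
      · rw [h]; decide
      · rw [h']; decide
      · exact absurd h (by decide)
      · exact absurd h (by decide)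
      · exact absurd h (by decide)
      · exact absurd h (by decide)
      · exact absurd h (by decide)
    rw [dist_eq_Df hn, dist_eq_Df hn, Df_aa_val1 hk]
    exact Df_le_from0 hk _ w hw2
  · intro w hw
    have hl := adj_layers hw
    dsimp only at hl
    have hw2 : w.1.val ≤ 1 := by
      rcases hl with h | ⟨h, h'⟩ | ⟨h, h'⟩ | ⟨h, h'⟩ | ⟨h, h'⟩ | ⟨h, h'⟩ | ⟨h, h'⟩
      · rw [h]; decide
      · rw [h']; decide
      · exact absurd h (by decide)
      · exact absurd h (by decide)
      · exact absurd h (by decide)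
      · exact absurd h (by decide)
      · exact absurd h (by decide)
    rw [dist_eq_Df hn, dist_eq_Df hn, Df_aa_val2 hk]
    exact Df_le_from0 hk _ w hw2

end pairs

section count
variable {k : ℕ}

lemma lower_bound (hk : 2 ≤ k) (S : Finset (Fin 4 × ZMod (2 * k)))
    (hS : IsStrongResolvingSet (Sn (2 * k)) ↑S) : 3 * k ≤ S.card := by
  classical
  haveI : NeZero (2 * k) := ⟨by omega⟩
  have hbd : ∀ i : ZMod (2 * k), ∃ p, p ∈ S ∧
      (p = ((1 : Fin 4), i) ∨ p = ((3 : Fin 4), i + ((k : ℕ) : ZMod (2 * k)))) := by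
    intro i
    rcases pair_bd hk hS i with h | h
    · exact ⟨_, h, Or.inl rfl⟩
    · exact ⟨_, h, Or.inr rfl⟩
  have haa : ∀ i : ZMod (2 * k), ∃ p, p ∈ S ∧
      (p = ((0 : Fin 4), i) ∨ p = ((0 : Fin 4), i + ((k : ℕ) : ZMod (2 * k)))) := by
    intro i
    rcases pair_aa hk hS i with h | h
    · exact ⟨_, h, Or.inl rfl⟩
    · exact ⟨_, h, Or.inr rfl⟩
  choose f hf hf2 using hbd
  choose g hg hg2 using haa
  set F : ZMod (2 * k) ⊕ Fin k → Fin 4 × ZMod (2 * k) :=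
    Sum.elim f (fun t => g ((t.val : ℕ) : ZMod (2 * k))) with hF
  have hmem : ∀ x, F x ∈ S := by
    rintro (i | t)
    · exact hf i
    · exact hg _
  have hvalt : ∀ t : Fin k, (((t.val : ℕ) : ZMod (2 * k))).val = t.val := by
    intro t
    exact ZMod.val_cast_of_lt (by omega)
  have hvaltk : ∀ t : Fin k, (((t.val : ℕ) : ZMod (2 * k)) + ((k : ℕ) : ZMod (2 * k))).val
      = t.val + k := by
    intro t
    rw [← Nat.cast_add]
    exact ZMod.val_cast_of_lt (by omega)
  have hinj : Function.Injective F := by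
    have hne13 : ¬((1 : Fin 4) = 3) := by decide
    have hne10 : ¬((1 : Fin 4) = 0) := by decide
    have hne30 : ¬((3 : Fin 4) = 0) := by decide
    have hne01 : ¬((0 : Fin 4) = 1) := by decide
    have hne03 : ¬((0 : Fin 4) = 3) := by decide
    have hne31 : ¬((3 : Fin 4) = 1) := by decide
    rintro (i | t) (i' | t') hxy
    · rcases hf2 i with h1 | h1 <;> rcases hf2 i' with h2 | h2 <;>
        rw [hF] at hxy <;> simp only [Sum.elim_inl] at hxy <;> rw [h1, h2] at hxy <;>
        rw [Prod.mk.injEq] at hxy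
      · rw [hxy.2]
      · exact absurd hxy.1 hne13
      · exact absurd hxy.1 hne31
      · have h3 : i = i' := by linear_combination hxy.2
        rw [h3]
    · exfalso
      rcases hf2 i with h1 | h1 <;> rcases hg2 ((t'.val : ℕ) : ZMod (2 * k)) with h2 | h2 <;>
        rw [hF] at hxy <;> simp only [Sum.elim_inl, Sum.elim_inr] at hxy <;>
        rw [h1, h2] at hxy <;> rw [Prod.mk.injEq] at hxy
      · exact absurd hxy.1 hne10
      · exact absurd hxy.1 hne10
      · exact absurd hxy.1 hne30
      · exact absurd hxy.1 hne30
    · exfalso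
      rcases hg2 ((t.val : ℕ) : ZMod (2 * k)) with h1 | h1 <;> rcases hf2 i' with h2 | h2 <;>
        rw [hF] at hxy <;> simp only [Sum.elim_inl, Sum.elim_inr] at hxy <;>
        rw [h1, h2] at hxy <;> rw [Prod.mk.injEq] at hxy
      · exact absurd hxy.1 hne01
      · exact absurd hxy.1 hne03
      · exact absurd hxy.1 hne01
      · exact absurd hxy.1 hne03
    · have ht := t.isLt
      have ht' := t'.isLt
      rcases hg2 ((t.val : ℕ) : ZMod (2 * k)) with h1 | h1 <;>
        rcases hg2 ((t'.val : ℕ) : ZMod (2 * k)) with h2 | h2 <;>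
        rw [hF] at hxy <;> simp only [Sum.elim_inr] at hxy <;> rw [h1, h2] at hxy <;>
        rw [Prod.mk.injEq] at hxy <;>
        have hval := congrArg ZMod.val hxy.2
      · rw [hvalt, hvalt] at hval
        congr 1
        exact Fin.ext hval
      · rw [hvalt, hvaltk] at hval
        omega
      · rw [hvaltk, hvalt] at hval
        omega
      · rw [hvaltk, hvaltk] at hval
        have : t = t' := Fin.ext (by omega)
        rw [this]
  calc 3 * k = Fintype.card (ZMod (2 * k) ⊕ Fin k) := by
        rw [Fintype.card_sum, ZMod.card, Fintype.card_fin]; omega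
    _ ≤ Fintype.card {p // p ∈ S} :=
        Fintype.card_le_of_injective (fun x => (⟨F x, hmem x⟩ : {p // p ∈ S}))
          (fun a b h => hinj (congrArg Subtype.val h))
    _ = S.card := Fintype.card_coe S

end count

section main
variable {k : ℕ}

theorem sdim_Sn_even' (hk : 2 ≤ k) :
    (∀ S : Finset (Fin 4 × ZMod (2 * k)),
      IsStrongResolvingSet (Sn (2 * k)) ↑S → 3 * k ≤ S.card) ∧
    IsStrongResolvingSet (Sn (2 * k))
      ({p : Fin 4 × ZMod (2 * k) | p.1 = 3} ∪
       {p : Fin 4 × ZMod (2 * k) | p.1 = 0 ∧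
          ∃ i : ℕ, 1 ≤ i ∧ i ≤ k ∧ p.2 = (i : ZMod (2 * k))}) ∧
    strongMetricDim (Sn (2 * k)) = 3 * k := by
  classical
  haveI : NeZero (2 * k) := ⟨by omega⟩
  refine ⟨fun S hS => lower_bound hk S hS, ?_, ?_⟩
  · -- need to match set: strong_resolve proved with same set but `p.1 = 3` as Fin eq
    exact strong_resolve hk
  · set A : Finset (Fin 4 × ZMod (2 * k)) := Finset.univ.filter (fun p => p.1 = 3) with hA
    set B : Finset (Fin 4 × ZMod (2 * k)) :=
      (Finset.Icc 1 k).image (fun i : ℕ => ((0 : Fin 4), (i : ZMod (2 * k)))) with hB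
    have hcoe : ↑(A ∪ B) =
        ({p : Fin 4 × ZMod (2 * k) | p.1 = 3} ∪
         {p : Fin 4 × ZMod (2 * k) | p.1 = 0 ∧
            ∃ i : ℕ, 1 ≤ i ∧ i ≤ k ∧ p.2 = (i : ZMod (2 * k))}) := by
      ext ⟨l, z⟩
      simp only [hA, hB, Finset.coe_union, Set.mem_union, Finset.coe_filter, Finset.mem_univ,
        true_and, Set.mem_setOf_eq, Finset.coe_image, Set.mem_image, Finset.mem_coe,
        Finset.mem_Icc, Prod.mk.injEq]
      constructor
      · rintro (h | ⟨i, ⟨hi1, hi2⟩, h1, h2⟩)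
        · exact Or.inl h
        · exact Or.inr ⟨h1.symm, i, hi1, hi2, h2.symm⟩
      · rintro (h | ⟨h1, i, hi1, hi2, h2⟩)
        · exact Or.inl h
        · exact Or.inr ⟨i, ⟨hi1, hi2⟩, h1.symm, h2.symm⟩
    have hAcard : A.card = 2 * k := by
      have : A = ({(3 : Fin 4)} : Finset (Fin 4)) ×ˢ (Finset.univ : Finset (ZMod (2 * k))) := by
        ext ⟨l, z⟩
        simp [hA, Finset.mem_product]
        exact eq_comm
      rw [this, Finset.card_product, Finset.card_singleton, Finset.card_univ, ZMod.card]
      omega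
    have hBcard : B.card = k := by
      rw [hB, Finset.card_image_of_injOn, Nat.card_Icc]
      · omega
      · intro a ha b hb hab
        simp only [Finset.coe_Icc, Set.mem_Icc] at ha hb
        have h2 := congrArg Prod.snd hab
        dsimp only at h2
        have := congrArg ZMod.val h2
        rw [ZMod.val_cast_of_lt (by omega), ZMod.val_cast_of_lt (by omega)] at this
        exact this
    have hdisj : Disjoint A B := by
      rw [Finset.disjoint_left]
      rintro ⟨l, z⟩ ha hb
      simp only [hA, Finset.mem_filter] at ha
      simp only [hB, Finset.mem_image, Prod.mk.injEq] at hb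
      obtain ⟨i, _, h1, _⟩ := hb
      rw [← h1] at ha
      exact absurd ha.2 (by decide)
    have hcard : (A ∪ B).card = 3 * k := by
      rw [Finset.card_union_of_disjoint hdisj, hAcard, hBcard]; omega
    have hmem3k : 3 * k ∈ {m | ∃ S : Finset (Fin 4 × ZMod (2 * k)),
        IsStrongResolvingSet (Sn (2 * k)) ↑S ∧ S.card = m} := by
      refine ⟨A ∪ B, ?_, hcard⟩
      rw [hcoe]
      exact strong_resolve hk
    refine le_antisymm (Nat.sInf_le hmem3k) (le_csInf ⟨3 * k, hmem3k⟩ ?_)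
    rintro b ⟨S', hS', hc⟩
    rw [← hc]
    exact lower_bound hk S' hS'

end main

theorem sdim_Sn_even (k : ℕ) (hk : 2 ≤ k) :
    (∀ S : Finset (Fin 4 × ZMod (2 * k)),
      IsStrongResolvingSet (Sn (2 * k)) ↑S → 3 * k ≤ S.card) ∧
    IsStrongResolvingSet (Sn (2 * k))
      ({p : Fin 4 × ZMod (2 * k) | p.1 = 3} ∪
       {p : Fin 4 × ZMod (2 * k) | p.1 = 0 ∧
          ∃ i : ℕ, 1 ≤ i ∧ i ≤ k ∧ p.2 = (i : ZMod (2 * k))}) ∧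
    strongMetricDim (Sn (2 * k)) = 3 * k := by
  exact sdim_Sn_even' hk
end

section
/- For n = 2k+1 with k ≥ 1, the set {a_1, a_{k+1}} is a local resolving set of the convex polytope U_n; hence lmd(U_n) = 2 for odd n ≥ 3 (since U_n is not bipartite). -/
/-- Layers: 0 = a, 1 = b, 2 = c, 3 = d, 4 = e. Vertex `(ℓ, i)` is `ℓ_i` (indices mod `n`). -/
def unRel (n : ℕ) (x y : Fin 5 × ZMod n) : Prop :=
  ((x.1 = 0 ∨ x.1 = 1 ∨ x.1 = 4) ∧ x.1 = y.1 ∧ y.2 = x.2 + 1) ∨ -- cycles on layers a, b, e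
  (x.1 = 0 ∧ y.1 = 1 ∧ x.2 = y.2) ∨                             -- a_i b_i
  (x.1 = 1 ∧ y.1 = 2 ∧ x.2 = y.2) ∨                             -- b_i c_i
  (x.1 = 2 ∧ y.1 = 3 ∧ (x.2 = y.2 ∨ x.2 = y.2 + 1)) ∨           -- c_i d_i and c_{i+1} d_i
  (x.1 = 3 ∧ y.1 = 4 ∧ x.2 = y.2)                               -- d_i e_i

/-- The convex polytope graph `U_n`. -/
def Un (n : ℕ) : SimpleGraph (Fin 5 × ZMod n) := SimpleGraph.fromRel (unRel n)

namespace LMDAux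

variable {k : ℕ}


/-- cyclic distance from 0 in `ZMod (2*k+1)` -/
def cyc (k : ℕ) (x : ZMod (2*k+1)) : ℕ := min x.val (2*k+1 - x.val)

lemma val_succ (hk : 1 ≤ k) (x : ZMod (2*k+1)) :
    ((x+1).val = x.val + 1 ∧ x.val + 1 < 2*k+1) ∨ ((x+1).val = 0 ∧ x.val + 1 = 2*k+1) := by
  have e1 : (1 : ZMod (2*k+1)).val = 1 := by
    have h := ZMod.val_natCast (n := 2*k+1) 1
    rw [Nat.cast_one] at h
    rw [h, Nat.mod_eq_of_lt (by omega)]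
  have h1 : (x+1).val = (x.val + 1) % (2*k+1) := by rw [ZMod.val_add, e1]
  have hv := ZMod.val_lt x
  rcases Nat.lt_or_ge (x.val + 1) (2*k+1) with h | h
  · exact Or.inl ⟨by rw [h1, Nat.mod_eq_of_lt h], h⟩
  · have h' : x.val + 1 = 2*k+1 := by omega
    exact Or.inr ⟨by rw [h1, h', Nat.mod_self], h'⟩

lemma step (hk : 1 ≤ k) (x : ZMod (2*k+1)) :
    (x.val < k ∧ (x+1).val = x.val + 1 ∧ cyc k x = x.val ∧ cyc k (x+1) = x.val + 1) ∨
    (x.val = k ∧ (x+1).val = k + 1 ∧ cyc k x = k ∧ cyc k (x+1) = k) ∨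
    (k < x.val ∧ x.val < 2*k ∧ (x+1).val = x.val + 1 ∧ cyc k x = 2*k+1 - x.val ∧
      cyc k (x+1) = 2*k - x.val) ∨
    (x.val = 2*k ∧ (x+1).val = 0 ∧ cyc k x = 1 ∧ cyc k (x+1) = 0) := by
  have hv := ZMod.val_lt x
  rcases val_succ hk x with ⟨h1, h2⟩ | ⟨h1, h2⟩ <;> unfold cyc <;> omega

lemma val_injective {n : ℕ} [NeZero n] : Function.Injective (ZMod.val (n := n)) :=
  ZMod.val_injective n



lemma cyc_eq_zero (x : ZMod (2*k+1)) : cyc k x = 0 ↔ x = 0 := by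
  have hv := ZMod.val_lt x
  unfold cyc
  rw [← ZMod.val_eq_zero]
  omega

lemma val_sub (hk : 1 ≤ k) (s : ZMod (2*k+1)) :
    ((s - (k:ℕ)).val = s.val - k ∧ k ≤ s.val) ∨
    ((s - (k:ℕ)).val = s.val + k + 1 ∧ s.val < k) := by
  have h0 : s - (k:ℕ) = s + ((k+1 : ℕ) : ZMod (2*k+1)) := by
    have hz : ((k:ℕ) : ZMod (2*k+1)) + ((k+1:ℕ) : ZMod (2*k+1)) = 0 := by
      rw [← Nat.cast_add, show k + (k+1) = 2*k+1 by ring, ZMod.natCast_self]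
    have hn := neg_eq_of_add_eq_zero_left hz
    rw [sub_eq_add_neg, ← hn, neg_neg]
  have h1 : (s - (k:ℕ)).val = (s.val + (k+1)) % (2*k+1) := by
    rw [h0, ZMod.val_add, ZMod.val_natCast, Nat.mod_eq_of_lt (show k+1 < 2*k+1 by omega)]
  have hv := ZMod.val_lt s
  rcases Nat.lt_or_ge s.val k with h | h
  · exact Or.inr ⟨by rw [h1, Nat.mod_eq_of_lt (by omega)]; omega, h⟩
  · refine Or.inl ⟨?_, h⟩
    rw [h1, show s.val + (k+1) = (2*k+1) + (s.val - k) by omega, Nat.add_mod_left,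
      Nat.mod_eq_of_lt (by omega)]

lemma badA (hk : 1 ≤ k) (x : ZMod (2*k+1)) : cyc k x = cyc k (x+1) ↔ x.val = k := by
  rcases step hk x with h | h | h | h <;> omega

lemma badE (hk : 1 ≤ k) (x : ZMod (2*k+1)) :
    min (cyc k x) (cyc k (x+1)) = min (cyc k (x+1)) (cyc k (x+1+1)) ↔ x.val = 2*k := by
  have h1 := step hk x
  have h2 := step hk (x+1)
  rcases h1 with h | h | h | h <;> rcases h2 with h' | h' | h' | h' <;> omega

lemma badCD (hk : 1 ≤ k) (x : ZMod (2*k+1)) :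
    cyc k x + 2 = min (cyc k x) (cyc k (x+1)) + 3 ↔ k + 1 ≤ x.val := by
  rcases step hk x with h | h | h | h <;> omega

lemma badCD2 (hk : 1 ≤ k) (x : ZMod (2*k+1)) :
    cyc k (x+1) + 2 = min (cyc k x) (cyc k (x+1)) + 3 ↔ x.val < k := by
  rcases step hk x with h | h | h | h <;> omega

lemma descent0 (hk : 1 ≤ k) (x : ZMod (2*k+1)) (h : cyc k x ≠ 0) :
    cyc k (x-1) + 1 = cyc k x ∨ cyc k (x+1) + 1 = cyc k x := by
  have e : (x - 1) + 1 = x := by ring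
  have h1 := step hk (x-1)
  rw [e] at h1
  have h2 := step hk x
  rcases h1 with h' | h' | h' | h' <;> rcases h2 with h'' | h'' | h'' | h'' <;> omega

lemma lipA (hk : 1 ≤ k) (x : ZMod (2*k+1)) :
    cyc k x ≤ cyc k (x+1) + 1 ∧ cyc k (x+1) ≤ cyc k x + 1 := by
  rcases step hk x with h | h | h | h <;> omega




lemma dist_eq_of {V : Type*} (G : SimpleGraph V) (t : V) (Df : V → ℕ)
    (h0 : ∀ x, Df x = 0 ↔ x = t)
    (hlip : ∀ x y, G.Adj x y → Df x ≤ Df y + 1)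
    (hdesc : ∀ x, Df x ≠ 0 → ∃ y, G.Adj x y ∧ Df y + 1 = Df x) (x : V) :
    G.dist x t = Df x := by
  have upper : ∀ N (x : V), Df x ≤ N → ∃ w : G.Walk x t, w.length = Df x := by
    intro N
    induction N with
    | zero =>
      intro x hx
      have hx0 : x = t := (h0 x).mp (Nat.le_zero.mp hx)
      subst hx0
      exact ⟨SimpleGraph.Walk.nil, by simp [(h0 x).mpr rfl]⟩
    | succ N ih =>
      intro x hx
      by_cases hx0 : Df x = 0
      · have hx1 : x = t := (h0 x).mp hx0
        subst hx1
        exact ⟨SimpleGraph.Walk.nil, by simp [(h0 x).mpr rfl]⟩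
      · obtain ⟨y, hadj, hy⟩ := hdesc x hx0
        obtain ⟨w, hw⟩ := ih y (by omega)
        exact ⟨SimpleGraph.Walk.cons hadj w, by simp [SimpleGraph.Walk.length_cons, hw]; omega⟩
  have lower : ∀ (u v : V) (w : G.Walk u v), Df u ≤ w.length + Df v := by
    intro u v w
    induction w with
    | nil => omega
    | cons h p ih =>
      have := hlip _ _ h
      simp only [SimpleGraph.Walk.length_cons]
      omega
  obtain ⟨w, hw⟩ := upper (Df x) x le_rfl
  have h1 : G.dist x t ≤ Df x := hw ▸ SimpleGraph.dist_le w
  obtain ⟨p, hp⟩ := w.reachable.exists_walk_length_eq_dist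
  have h2 : Df x ≤ G.dist x t := by
    have := lower x t p
    have ht : Df t = 0 := (h0 t).mpr rfl
    omega
  omega

def D (k : ℕ) (j : ZMod (2*k+1)) (x : Fin 5 × ZMod (2*k+1)) : ℕ :=
  if x.1 = 0 then cyc k (x.2 - j)
  else if x.1 = 1 then cyc k (x.2 - j) + 1
  else if x.1 = 2 then cyc k (x.2 - j) + 2
  else if x.1 = 3 then min (cyc k (x.2 - j)) (cyc k (x.2 - j + 1)) + 3
  else min (cyc k (x.2 - j)) (cyc k (x.2 - j + 1)) + 4

lemma D0 (j i) : D k j (0, i) = cyc k (i - j) := rfl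
lemma D1 (j i) : D k j (1, i) = cyc k (i - j) + 1 := rfl
lemma D2 (j i) : D k j (2, i) = cyc k (i - j) + 2 := rfl
lemma D3 (j i) : D k j (3, i) = min (cyc k (i - j)) (cyc k (i - j + 1)) + 3 := rfl
lemma D4 (j i) : D k j (4, i) = min (cyc k (i - j)) (cyc k (i - j + 1)) + 4 := rfl

lemma adj_of (j : ZMod (2*k+1)) {x y : Fin 5 × ZMod (2*k+1)}
    (h : unRel (2*k+1) x y ∨ unRel (2*k+1) y x) (hne : D k j x ≠ D k j y) :
    (Un (2*k+1)).Adj x y := by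
  rw [Un, SimpleGraph.fromRel_adj]
  exact ⟨fun he => hne (by rw [he]), h⟩




lemma D_eq_zero (j : ZMod (2*k+1)) (x) : D k j x = 0 ↔ x = ((0 : Fin 5), j) := by
  obtain ⟨⟨lv, hlv⟩, i⟩ := x
  interval_cases lv
  · show D k j (0, i) = 0 ↔ ((0 : Fin 5), i) = ((0 : Fin 5), j)
    rw [D0, cyc_eq_zero, sub_eq_zero, Prod.ext_iff]
    simp
  · show D k j (1, i) = 0 ↔ ((1 : Fin 5), i) = ((0 : Fin 5), j)
    rw [D1, Prod.ext_iff]; simp [show (1 : Fin 5) ≠ 0 by decide]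
  · show D k j (2, i) = 0 ↔ ((2 : Fin 5), i) = ((0 : Fin 5), j)
    rw [D2, Prod.ext_iff]; simp [show (2 : Fin 5) ≠ 0 by decide]
  · show D k j (3, i) = 0 ↔ ((3 : Fin 5), i) = ((0 : Fin 5), j)
    rw [D3, Prod.ext_iff]; simp [show (3 : Fin 5) ≠ 0 by decide]
  · show D k j (4, i) = 0 ↔ ((4 : Fin 5), i) = ((0 : Fin 5), j)
    rw [D4, Prod.ext_iff]; simp [show (4 : Fin 5) ≠ 0 by decide]

lemma lip (hk : 1 ≤ k) (j : ZMod (2*k+1)) :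
    ∀ x y, unRel (2*k+1) x y → D k j x ≤ D k j y + 1 ∧ D k j y ≤ D k j x + 1 := by
  rintro ⟨l, i⟩ ⟨l', i'⟩ h
  simp only [unRel] at h
  rcases h with ⟨hl, hll', hii'⟩ | ⟨h1, h2, h3⟩ | ⟨h1, h2, h3⟩ | ⟨h1, h2, h3⟩ | ⟨h1, h2, h3⟩
  · subst hll' hii'
    have e1 : i + 1 - j = (i - j) + 1 := by ring
    rcases hl with hl | hl | hl <;> subst hl
    · rw [D0, D0, e1]; have := step hk (i - j); omega
    · rw [D1, D1, e1]; have := step hk (i - j); omega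
    · rw [D4, D4, e1]
      have h1 := step hk (i - j); have h2 := step hk (i - j + 1); omega
  · subst h1 h2 h3; rw [D0, D1]; omega
  · subst h1 h2 h3; rw [D1, D2]; omega
  · subst h1 h2
    rcases h3 with h3 | h3 <;> subst h3
    · rw [D2, D3]; have := step hk (i - j); omega
    · rw [D3, D2, show i' + 1 - j = (i' - j) + 1 from by ring]
      have := step hk (i' - j); omega
  · subst h1 h2 h3; rw [D3, D4]; omega

lemma desc (hk : 1 ≤ k) (j : ZMod (2*k+1)) :
    ∀ x, D k j x ≠ 0 → ∃ y, (Un (2*k+1)).Adj x y ∧ D k j y + 1 = D k j x := by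
  rintro ⟨⟨lv, hlv⟩, i⟩ h
  interval_cases lv
  · show ∃ y, (Un (2*k+1)).Adj ((0 : Fin 5), i) y ∧ D k j y + 1 = D k j ((0 : Fin 5), i)
    have h' : cyc k (i - j) ≠ 0 := h
    rcases descent0 hk (i - j) h' with hd | hd
    · have e : i - 1 - j = (i - j) - 1 := by ring
      refine ⟨(0, i - 1), adj_of j (Or.inr (Or.inl ⟨Or.inl rfl, rfl, by ring⟩)) ?_, ?_⟩
      · rw [D0, D0, e]; omega
      · rw [D0, D0, e]; omega
    · have e : i + 1 - j = (i - j) + 1 := by ring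
      refine ⟨(0, i + 1), adj_of j (Or.inl (Or.inl ⟨Or.inl rfl, rfl, rfl⟩)) ?_, ?_⟩
      · rw [D0, D0, e]; omega
      · rw [D0, D0, e]; omega
  · show ∃ y, (Un (2*k+1)).Adj ((1 : Fin 5), i) y ∧ D k j y + 1 = D k j ((1 : Fin 5), i)
    exact ⟨(0, i), adj_of j (Or.inr (Or.inr (Or.inl ⟨rfl, rfl, rfl⟩))) (by rw [D0, D1]; omega),
      by rw [D0, D1]⟩
  · show ∃ y, (Un (2*k+1)).Adj ((2 : Fin 5), i) y ∧ D k j y + 1 = D k j ((2 : Fin 5), i)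
    exact ⟨(1, i), adj_of j (Or.inr (Or.inr (Or.inr (Or.inl ⟨rfl, rfl, rfl⟩))))
      (by rw [D1, D2]; omega), by rw [D1, D2]⟩
  · show ∃ y, (Un (2*k+1)).Adj ((3 : Fin 5), i) y ∧ D k j y + 1 = D k j ((3 : Fin 5), i)
    by_cases hmin : cyc k (i - j) ≤ cyc k (i - j + 1)
    · refine ⟨(2, i), adj_of j (Or.inr (Or.inr (Or.inr (Or.inr (Or.inl ⟨rfl, rfl, Or.inl rfl⟩)))))
        ?_, ?_⟩
      · rw [D2, D3]; omega
      · rw [D2, D3]; omega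
    · have e : i + 1 - j = (i - j) + 1 := by ring
      refine ⟨(2, i + 1), adj_of j (Or.inr (Or.inr (Or.inr (Or.inr (Or.inl
          ⟨rfl, rfl, Or.inr rfl⟩))))) ?_, ?_⟩
      · rw [D2, D3, e]; omega
      · rw [D2, D3, e]; omega
  · show ∃ y, (Un (2*k+1)).Adj ((4 : Fin 5), i) y ∧ D k j y + 1 = D k j ((4 : Fin 5), i)
    exact ⟨(3, i), adj_of j (Or.inr (Or.inr (Or.inr (Or.inr (Or.inr ⟨rfl, rfl, rfl⟩)))))
      (by rw [D3, D4]; omega), by rw [D3, D4]⟩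

lemma dist_formula (hk : 1 ≤ k) (j : ZMod (2*k+1)) (x) :
    (Un (2*k+1)).dist x ((0 : Fin 5), j) = D k j x := by
  refine dist_eq_of _ _ _ (D_eq_zero j) ?_ (desc hk j) x
  intro x y hxy
  rw [Un, SimpleGraph.fromRel_adj] at hxy
  rcases hxy.2 with h | h
  · exact (lip hk j x y h).1
  · exact (lip hk j y x h).2




lemma hvl (x : ZMod (2*k+1)) : x.val < 2*k+1 := ZMod.val_lt x

lemma coreA (hk : 1 ≤ k) (s : ZMod (2*k+1)) :
    cyc k s ≠ cyc k (s+1) ∨ cyc k (s - (k:ℕ)) ≠ cyc k (s - (k:ℕ) + 1) := by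
  by_cases hc : cyc k s = cyc k (s+1)
  · right
    have hs := (badA hk s).mp hc
    intro hEq
    have h2 := (badA hk _).mp hEq
    rcases val_sub hk s with ⟨h1, _⟩ | ⟨h1, _⟩ <;> omega
  · exact Or.inl hc

lemma coreE (hk : 1 ≤ k) (s : ZMod (2*k+1)) :
    min (cyc k s) (cyc k (s+1)) ≠ min (cyc k (s+1)) (cyc k (s+1+1)) ∨
    min (cyc k (s - (k:ℕ))) (cyc k (s - (k:ℕ) + 1)) ≠
      min (cyc k (s - (k:ℕ) + 1)) (cyc k (s - (k:ℕ) + 1 + 1)) := by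
  by_cases hc : min (cyc k s) (cyc k (s+1)) = min (cyc k (s+1)) (cyc k (s+1+1))
  · right
    have hs := (badE hk s).mp hc
    intro hEq
    have h2 := (badE hk _).mp hEq
    have := hvl s
    rcases val_sub hk s with ⟨h1, _⟩ | ⟨h1, _⟩ <;> omega
  · exact Or.inl hc

lemma coreCD (hk : 1 ≤ k) (s : ZMod (2*k+1)) :
    cyc k s + 2 ≠ min (cyc k s) (cyc k (s+1)) + 3 ∨
    cyc k (s - (k:ℕ)) + 2 ≠ min (cyc k (s - (k:ℕ))) (cyc k (s - (k:ℕ) + 1)) + 3 := by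
  by_cases hc : cyc k s + 2 = min (cyc k s) (cyc k (s+1)) + 3
  · right
    have hs := (badCD hk s).mp hc
    intro hEq
    have h2 := (badCD hk _).mp hEq
    have := hvl s
    rcases val_sub hk s with ⟨h1, _⟩ | ⟨h1, _⟩ <;> omega
  · exact Or.inl hc

lemma coreCD2 (hk : 1 ≤ k) (s : ZMod (2*k+1)) :
    cyc k (s+1) + 2 ≠ min (cyc k s) (cyc k (s+1)) + 3 ∨
    cyc k (s - (k:ℕ) + 1) + 2 ≠ min (cyc k (s - (k:ℕ))) (cyc k (s - (k:ℕ) + 1)) + 3 := by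
  by_cases hc : cyc k (s+1) + 2 = min (cyc k s) (cyc k (s+1)) + 3
  · right
    have hs := (badCD2 hk s).mp hc
    intro hEq
    have h2 := (badCD2 hk _).mp hEq
    rcases val_sub hk s with ⟨h1, _⟩ | ⟨h1, _⟩ <;> omega
  · exact Or.inl hc

lemma resolve (hk : 1 ≤ k) {u v : Fin 5 × ZMod (2*k+1)} (h : unRel (2*k+1) u v) :
    D k ((1:ℕ) : ZMod (2*k+1)) u ≠ D k ((1:ℕ) : ZMod (2*k+1)) v ∨
    D k ((k+1:ℕ) : ZMod (2*k+1)) u ≠ D k ((k+1:ℕ) : ZMod (2*k+1)) v := by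
  set j1 : ZMod (2*k+1) := ((1:ℕ) : ZMod (2*k+1)) with hj1
  set j2 : ZMod (2*k+1) := ((k+1:ℕ) : ZMod (2*k+1)) with hj2
  have hj : j2 = j1 + (k:ℕ) := by rw [hj1, hj2]; push_cast; ring
  obtain ⟨l, i⟩ := u
  obtain ⟨l', i'⟩ := v
  simp only [unRel] at h
  have e2 : ∀ i : ZMod (2*k+1), i - j2 = (i - j1) - (k:ℕ) := fun i => by rw [hj]; ring
  rcases h with ⟨hl, hll', hii'⟩ | ⟨h1, h2, h3⟩ | ⟨h1, h2, h3⟩ | ⟨h1, h2, h3⟩ | ⟨h1, h2, h3⟩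
  · subst hll' hii'
    have ea : i + 1 - j1 = (i - j1) + 1 := by ring
    have eb : i + 1 - j2 = (i - j1) - (k:ℕ) + 1 := by rw [hj]; ring
    rcases hl with hl | hl | hl <;> subst hl
    · rw [D0, D0, D0, D0, ea, eb, e2 i]
      exact coreA hk (i - j1)
    · rw [D1, D1, D1, D1, ea, eb, e2 i]
      rcases coreA hk (i - j1) with h | h
      · exact Or.inl (by omega)
      · exact Or.inr (by omega)
    · rw [D4, D4, D4, D4, ea, eb, e2 i]
      rcases coreE hk (i - j1) with h | h
      · exact Or.inl (by omega)
      · exact Or.inr (by omega)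
  · subst h1 h2 h3; left; rw [D0, D1]; omega
  · subst h1 h2 h3; left; rw [D1, D2]; omega
  · subst h1 h2
    rcases h3 with h3 | h3 <;> subst h3
    · rw [D2, D2, D3, D3, e2 i]
      exact coreCD hk (i - j1)
    · have ea : i' + 1 - j1 = (i' - j1) + 1 := by ring
      have eb : i' + 1 - j2 = (i' - j1) - (k:ℕ) + 1 := by rw [hj]; ring
      rw [D2, D2, D3, D3, ea, eb, e2 i']
      exact coreCD2 hk (i' - j1)
  · subst h1 h2 h3; left; rw [D3, D4]; omega



lemma hne10 (hk : 1 ≤ k) : (1 : ZMod (2*k+1)) ≠ 0 := by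
  intro hEq
  have h := congrArg ZMod.val hEq
  have e1 : (1 : ZMod (2*k+1)).val = 1 := by
    have h2 := ZMod.val_natCast (n := 2*k+1) 1
    rw [Nat.cast_one] at h2
    rw [h2, Nat.mod_eq_of_lt (by omega)]
  rw [e1, ZMod.val_zero] at h
  omega

lemma adjA (hk : 1 ≤ k) (i : ZMod (2*k+1)) :
    (Un (2*k+1)).Adj ((0 : Fin 5), i) ((0 : Fin 5), i + 1) := by
  rw [Un, SimpleGraph.fromRel_adj]
  constructor
  · intro hEq
    have h := (Prod.ext_iff.mp hEq).2
    simp only at h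
    exact hne10 hk (by linear_combination -h)
  · exact Or.inl (Or.inl ⟨Or.inl rfl, rfl, rfl⟩)

lemma not1 (hk : 1 ≤ k) (w : Fin 5 × ZMod (2*k+1)) :
    ¬ IsLocalResolvingSet (Un (2*k+1)) {w} := by
  intro hres
  set g : ℕ → ℤ := fun i => ((Un (2*k+1)).dist ((0 : Fin 5), (i : ZMod (2*k+1))) w : ℤ) with hg
  have hstep : ∀ i ∈ Finset.range (2*k+1), (g (i+1) - g i) % 2 = 1 := by
    intro i _
    have hcast : ((i+1:ℕ) : ZMod (2*k+1)) = (i : ZMod (2*k+1)) + 1 := by push_cast; ring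
    have hadj : (Un (2*k+1)).Adj ((0 : Fin 5), (i : ZMod (2*k+1)))
        ((0 : Fin 5), ((i+1:ℕ) : ZMod (2*k+1))) := by
      rw [hcast]; exact adjA hk _
    obtain ⟨w', hw', hd⟩ := hres _ _ hadj
    rw [Set.mem_singleton_iff] at hw'
    rw [hw'] at hd
    by_cases hr : (Un (2*k+1)).Reachable ((0 : Fin 5), (i : ZMod (2*k+1))) w
    · have hr2 : (Un (2*k+1)).Reachable ((0 : Fin 5), ((i+1:ℕ) : ZMod (2*k+1))) w :=
        hadj.symm.reachable.trans hr
      obtain ⟨p1, hp1⟩ := hr.exists_walk_length_eq_dist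
      obtain ⟨p2, hp2⟩ := hr2.exists_walk_length_eq_dist
      have b1 := SimpleGraph.dist_le (SimpleGraph.Walk.cons hadj p2)
      have b2 := SimpleGraph.dist_le (SimpleGraph.Walk.cons hadj.symm p1)
      rw [SimpleGraph.Walk.length_cons, hp2] at b1
      rw [SimpleGraph.Walk.length_cons, hp1] at b2
      simp only [hg]
      omega
    · have hr2 : ¬ (Un (2*k+1)).Reachable ((0 : Fin 5), ((i+1:ℕ) : ZMod (2*k+1))) w :=
        fun h => hr (hadj.reachable.trans h)
      rw [SimpleGraph.dist_eq_zero_of_not_reachable hr,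
        SimpleGraph.dist_eq_zero_of_not_reachable hr2] at hd
      exact absurd rfl hd
  have hsum := Finset.sum_range_sub g (2*k+1)
  have hgn : g (2*k+1) = g 0 := by
    simp only [hg, ZMod.natCast_self, Nat.cast_zero]
  have hmod := Finset.sum_int_mod (Finset.range (2*k+1)) 2 (fun i => g (i+1) - g i)
  rw [hsum, hgn, sub_self] at hmod
  rw [Finset.sum_congr rfl hstep, Finset.sum_const, Finset.card_range] at hmod
  simp at hmod


end LMDAux

theorem lmd_Un_odd (k : ℕ) (hk : 1 ≤ k) :
    IsLocalResolvingSet (Un (2 * k + 1))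
      {((0 : Fin 5), ((1 : ℕ) : ZMod (2 * k + 1))),
       ((0 : Fin 5), ((k + 1 : ℕ) : ZMod (2 * k + 1)))} ∧
    localMetricDim (Un (2 * k + 1)) = 2 := by
  have hres : IsLocalResolvingSet (Un (2 * k + 1))
      {((0 : Fin 5), ((1 : ℕ) : ZMod (2 * k + 1))),
       ((0 : Fin 5), ((k + 1 : ℕ) : ZMod (2 * k + 1)))} := by
    intro u v hadj
    rw [Un, SimpleGraph.fromRel_adj] at hadj
    obtain ⟨hne, h | h⟩ := hadj
    · rcases LMDAux.resolve hk h with h' | h'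
      · exact ⟨_, Set.mem_insert _ _,
          by rw [LMDAux.dist_formula hk _ u, LMDAux.dist_formula hk _ v]; exact h'⟩
      · exact ⟨_, Set.mem_insert_of_mem _ rfl,
          by rw [LMDAux.dist_formula hk _ u, LMDAux.dist_formula hk _ v]; exact h'⟩
    · rcases LMDAux.resolve hk h with h' | h'
      · exact ⟨_, Set.mem_insert _ _,
          by rw [LMDAux.dist_formula hk _ u, LMDAux.dist_formula hk _ v]; exact (Ne.symm h')⟩
      · exact ⟨_, Set.mem_insert_of_mem _ rfl,
          by rw [LMDAux.dist_formula hk _ u, LMDAux.dist_formula hk _ v]; exact (Ne.symm h')⟩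
  refine ⟨hres, ?_⟩
  have hne12 : ((0 : Fin 5), ((1:ℕ) : ZMod (2*k+1))) ≠
      ((0 : Fin 5), ((k+1:ℕ) : ZMod (2*k+1))) := by
    intro hEq
    have h := congrArg (fun p => ZMod.val p.2) hEq
    simp only [ZMod.val_natCast] at h
    rw [Nat.mod_eq_of_lt (by omega), Nat.mod_eq_of_lt (by omega)] at h
    omega
  have h2mem : 2 ∈ {m | ∃ W : Finset (Fin 5 × ZMod (2*k+1)),
      IsLocalResolvingSet (Un (2*k+1)) ↑W ∧ W.card = m} := by
    refine ⟨{((0 : Fin 5), ((1:ℕ) : ZMod (2*k+1))),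
      ((0 : Fin 5), ((k+1:ℕ) : ZMod (2*k+1)))}, ?_, ?_⟩
    · have hc : (↑({((0 : Fin 5), ((1:ℕ) : ZMod (2*k+1))),
          ((0 : Fin 5), ((k+1:ℕ) : ZMod (2*k+1)))} : Finset (Fin 5 × ZMod (2*k+1))) :
            Set (Fin 5 × ZMod (2*k+1))) =
          {((0 : Fin 5), ((1:ℕ) : ZMod (2*k+1))),
           ((0 : Fin 5), ((k+1:ℕ) : ZMod (2*k+1)))} := by
        simp
      rw [hc]; exact hres
    · rw [Finset.card_insert_of_notMem (by simpa using hne12), Finset.card_singleton]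
  unfold localMetricDim
  refine le_antisymm (Nat.sInf_le h2mem) (le_csInf ⟨2, h2mem⟩ ?_)
  rintro b ⟨W, hW, hcard⟩
  rcases Nat.lt_or_ge b 2 with hb | hb
  · exfalso
    interval_cases b
    · rw [Finset.card_eq_zero] at hcard; subst hcard
      obtain ⟨w, hw, -⟩ := hW _ _ (LMDAux.adjA hk 0)
      simp at hw
    · rw [Finset.card_eq_one] at hcard
      obtain ⟨w, rfl⟩ := hcard
      exact LMDAux.not1 hk w (by simpa using hW)
  · exact hb
end

section
/- For even n = 2k with k ≥ 5, the set {c_1, c_k} is a local resolving set of U_n; hence lmd(U_n) = 2 for such n. -/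
namespace LmdUn
def mm (n v : ℕ) : ℕ := min v (n - v)
def ee (n v : ℕ) : ℕ := min v (n - 1 - v)
def gg (m : ℕ) : ℕ := min (2*m) (m+2)
def D (n : ℕ) (t : ZMod n) (x : Fin 5 × ZMod n) : ℕ :=
  match x with
  | (0, i) => mm n ((i - t).val) + 2
  | (1, i) => mm n ((i - t).val) + 1
  | (2, i) => gg (mm n ((i - t).val))
  | (3, i) => 1 + gg (ee n ((i - t).val))
  | (4, i) => ee n ((i - t).val) + 2

variable {n : ℕ} [NeZero n]

lemma val_add_cases (x y : ZMod n) :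
    (x + y).val = x.val + y.val ∨ (x + y).val + n = x.val + y.val := by
  have h := ZMod.val_add x y
  have hx := ZMod.val_lt x
  have hy := ZMod.val_lt y
  rcases Nat.lt_or_ge (x.val + y.val) n with h' | h'
  · left; rw [h, Nat.mod_eq_of_lt h']
  · right; rw [h]
    have : (x.val + y.val) % n = x.val + y.val - n := by
      rw [Nat.mod_eq_sub_mod h', Nat.mod_eq_of_lt (by omega)]
    omega

lemma val_succ (hn : 2 ≤ n) (x : ZMod n) :
    (x + 1).val = x.val + 1 ∨ ((x + 1).val = 0 ∧ x.val + 1 = n) := by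
  have h1 : (1 : ZMod n).val = 1 := ZMod.val_one_eq_one_mod n ▸ Nat.mod_eq_of_lt hn
  rcases val_add_cases x 1 with h | h
  · left; omega
  · right; have := ZMod.val_lt x; have := ZMod.val_lt (x + 1); omega

lemma ne_succ (hn : 2 ≤ n) (i : ZMod n) : i ≠ i + 1 := by
  intro h
  have h2 := val_succ hn i
  rw [← h] at h2
  have := ZMod.val_lt i
  omega

lemma adj_iff {x y : Fin 5 × ZMod n} :
    (Un n).Adj x y ↔ x ≠ y ∧ (unRel n x y ∨ unRel n y x) := SimpleGraph.fromRel_adj _ _ _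

lemma ne_of_idx {ℓ : Fin 5} {i j : ZMod n} (h : i ≠ j) : (ℓ, i) ≠ (ℓ, j) :=
  fun hh => h (congrArg Prod.snd hh)

lemma lip (hn : 2 ≤ n) (hev : n % 2 = 0) (t : ZMod n) :
    ∀ x y : Fin 5 × ZMod n, unRel n x y → D n t x ≤ D n t y + 1 ∧ D n t y ≤ D n t x + 1 := by
  rintro ⟨ℓ, i⟩ ⟨ℓ', j⟩ h
  have V := ZMod.val_lt (i - t)
  have V0 := ZMod.val_lt (i - t - 1)
  have S0 := val_succ hn (i - t - 1)
  rw [show i - t - 1 + 1 = i - t by ring] at S0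
  have S1 := val_succ hn (i - t)
  have e1 : i + 1 - t = i - t + 1 := by ring
  have e4 : i - 1 - t = i - t - 1 := by ring
  rcases h with ⟨(rfl | rfl | rfl), rfl, rfl⟩ | ⟨rfl, rfl, rfl⟩ | ⟨rfl, rfl, rfl⟩ |
    ⟨rfl, rfl, (rfl | hij)⟩ | ⟨rfl, rfl, rfl⟩ <;>
    [skip; skip; skip; skip; skip; skip;
      (obtain rfl : j = i - 1 := by have hij2 : i = j + 1 := hij; rw [hij2]; ring); skip] <;>
    simp only [D, e1, e4, mm, ee, gg] <;> omega

lemma descent (hn : 2 ≤ n) (hev : n % 2 = 0) (t : ZMod n) (x : Fin 5 × ZMod n)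
    (hx : D n t x ≠ 0) : ∃ y, (Un n).Adj x y ∧ D n t y + 1 = D n t x := by
  obtain ⟨ℓ, i⟩ := x
  have V := ZMod.val_lt (i - t)
  have V0 := ZMod.val_lt (i - t - 1)
  have S0 := val_succ hn (i - t - 1)
  rw [show i - t - 1 + 1 = i - t by ring] at S0
  have S1 := val_succ hn (i - t)
  have e1 : i + 1 - t = i - t + 1 := by ring
  have e4 : i - 1 - t = i - t - 1 := by ring
  have nsucc : ∀ j : ZMod n, (ℓ, j) ≠ (ℓ, j + 1) := fun j => ne_of_idx (ne_succ hn j)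
  have npred : ∀ j : ZMod n, (ℓ, j) ≠ (ℓ, j - 1) := by
    intro j h
    have h2 : j = j - 1 := congrArg Prod.snd h
    exact ne_succ hn (j - 1) (by rw [show j - 1 + 1 = j by ring]; exact h2.symm)
  fin_cases ℓ
  · -- layer a : go to b_i
    exact ⟨(1, i), adj_iff.mpr ⟨by simp [Prod.ext_iff], Or.inl (Or.inr (Or.inl ⟨rfl, rfl, rfl⟩))⟩,
      rfl⟩
  · -- layer b
    rcases Nat.eq_zero_or_pos (i - t).val with h0 | h0
    · -- v = 0 : go to c_i
      refine ⟨(2, i), adj_iff.mpr ⟨by simp [Prod.ext_iff],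
        Or.inl (Or.inr (Or.inr (Or.inl ⟨rfl, rfl, rfl⟩)))⟩, ?_⟩
      simp only [D, mm, gg]; omega
    · rcases Nat.lt_or_ge (i - t).val (n / 2 + 1) with hv | hv
      · -- 1 ≤ v ≤ n/2 : go to b_{i-1}
        refine ⟨(1, i - 1), adj_iff.mpr ⟨npred i,
          Or.inr (Or.inl ⟨Or.inr (Or.inl rfl), rfl, by show i = i - 1 + 1; ring⟩)⟩, ?_⟩
        simp only [D, e4, mm, gg]; omega
      · -- v > n/2 : go to b_{i+1}
        refine ⟨(1, i + 1), adj_iff.mpr ⟨nsucc i,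
          Or.inl (Or.inl ⟨Or.inr (Or.inl rfl), rfl, rfl⟩)⟩, ?_⟩
        simp only [D, e1, mm, gg]; omega
  · -- layer c
    have hv : (i - t).val ≠ 0 := by
      intro h; apply hx; simp only [D, mm, gg]; omega
    rcases eq_or_ne (i - t).val 1 with h1 | h1
    · -- v = 1 : go to d_{i-1}
      refine ⟨(3, i - 1), adj_iff.mpr ⟨by simp [Prod.ext_iff],
        Or.inl (Or.inr (Or.inr (Or.inr (Or.inl ⟨rfl, rfl, Or.inr (by show i = i - 1 + 1; ring)⟩))))⟩, ?_⟩
      simp only [D, e4, mm, ee, gg]; omega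
    · rcases eq_or_ne ((i - t).val + 1) n with h2 | h2
      · -- v = n - 1 : go to d_i
        refine ⟨(3, i), adj_iff.mpr ⟨by simp [Prod.ext_iff],
          Or.inl (Or.inr (Or.inr (Or.inr (Or.inl ⟨rfl, rfl, Or.inl rfl⟩))))⟩, ?_⟩
        simp only [D, mm, ee, gg]; omega
      · -- 2 ≤ v ≤ n-2 : go to b_i
        refine ⟨(1, i), adj_iff.mpr ⟨by simp [Prod.ext_iff],
          Or.inr (Or.inr (Or.inr (Or.inl ⟨rfl, rfl, rfl⟩)))⟩, ?_⟩
        simp only [D, mm, gg]; omega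
  · -- layer d
    rcases Nat.lt_or_ge (i - t).val (n / 2) with hc | hc
    · -- go to c_i
      refine ⟨(2, i), adj_iff.mpr ⟨by simp [Prod.ext_iff],
        Or.inr (Or.inr (Or.inr (Or.inr (Or.inl ⟨rfl, rfl, Or.inl rfl⟩))))⟩, ?_⟩
      simp only [D, mm, ee, gg]; omega
    · -- go to c_{i+1}
      refine ⟨(2, i + 1), adj_iff.mpr ⟨by simp [Prod.ext_iff],
        Or.inr (Or.inr (Or.inr (Or.inr (Or.inl ⟨rfl, rfl, Or.inr rfl⟩))))⟩, ?_⟩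
      simp only [D, e1, mm, ee, gg]; omega
  · -- layer e
    rcases Nat.eq_zero_or_pos (ee n (i - t).val) with h0 | h0
    · -- μ = 0 : go to d_i
      refine ⟨(3, i), adj_iff.mpr ⟨by simp [Prod.ext_iff],
        Or.inr (Or.inr (Or.inr (Or.inr (Or.inr ⟨rfl, rfl, rfl⟩))))⟩, ?_⟩
      simp only [ee] at h0
      simp only [D, mm, ee, gg]; omega
    · simp only [ee] at h0
      rcases Nat.lt_or_ge (i - t).val (n / 2) with hv | hv
      · -- go to e_{i-1}
        refine ⟨(4, i - 1), adj_iff.mpr ⟨npred i,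
          Or.inr (Or.inl ⟨Or.inr (Or.inr rfl), rfl, by show i = i - 1 + 1; ring⟩)⟩, ?_⟩
        simp only [D, e4, mm, ee, gg]; omega
      · -- go to e_{i+1}
        refine ⟨(4, i + 1), adj_iff.mpr ⟨nsucc i,
          Or.inl (Or.inl ⟨Or.inr (Or.inr rfl), rfl, rfl⟩)⟩, ?_⟩
        simp only [D, e1, mm, ee, gg]; omega

lemma D_zero (t : ZMod n) {x : Fin 5 × ZMod n} (h : D n t x = 0) : x = (2, t) := by
  obtain ⟨ℓ, i⟩ := x
  have V := ZMod.val_lt (i - t)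
  fin_cases ℓ <;> simp only [D, mm, ee, gg] at h
  · omega
  · omega
  · have hv : (i - t).val = 0 := by omega
    have h1 : i - t = 0 := (ZMod.val_eq_zero _).mp hv
    have h2 : i = t := by linear_combination h1
    simp [h2]
  · omega
  · omega

lemma D_center (t : ZMod n) : D n t (2, t) = 0 := by
  simp [D, mm, gg]

lemma exists_walk (hn : 2 ≤ n) (hev : n % 2 = 0) (t : ZMod n) :
    ∀ (N : ℕ) (x : Fin 5 × ZMod n), D n t x ≤ N →
      ∃ p : (Un n).Walk x (2, t), p.length ≤ D n t x := by
  intro N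
  induction N with
  | zero =>
    intro x h
    obtain rfl : x = (2, t) := D_zero t (by omega)
    exact ⟨SimpleGraph.Walk.nil, by simp⟩
  | succ N ih =>
    intro x h
    rcases Nat.eq_zero_or_pos (D n t x) with h0 | h0
    · obtain rfl : x = (2, t) := D_zero t h0
      exact ⟨SimpleGraph.Walk.nil, by simp⟩
    · obtain ⟨y, hadj, hy⟩ := descent hn hev t x (by omega)
      obtain ⟨p, hp⟩ := ih y (by omega)
      exact ⟨SimpleGraph.Walk.cons hadj p, by simp [SimpleGraph.Walk.length_cons]; omega⟩

lemma D_le_walk (hn : 2 ≤ n) (hev : n % 2 = 0) (t : ZMod n) :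
    ∀ {x y : Fin 5 × ZMod n} (p : (Un n).Walk x y), D n t x ≤ p.length + D n t y := by
  intro x y p
  induction p with
  | nil => simp
  | @cons u v w h p ih =>
    rcases adj_iff.mp h with ⟨-, hr | hr⟩
    · have := lip hn hev t u v hr
      simp only [SimpleGraph.Walk.length_cons]; omega
    · have := lip hn hev t v u hr
      simp only [SimpleGraph.Walk.length_cons]; omega

lemma dist_eq_D (hn : 2 ≤ n) (hev : n % 2 = 0) (t : ZMod n) (x : Fin 5 × ZMod n) :
    (Un n).dist x (2, t) = D n t x := by
  obtain ⟨p, hp⟩ := exists_walk hn hev t (D n t x) x le_rfl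
  refine le_antisymm (le_trans (SimpleGraph.dist_le p) hp) ?_
  obtain ⟨q, hq⟩ := (SimpleGraph.Walk.reachable p).exists_walk_length_eq_dist
  rw [← hq]
  have := D_le_walk hn hev t q
  rw [D_center] at this
  omega

lemma reach (hn : 2 ≤ n) (hev : n % 2 = 0) (t : ZMod n) (x : Fin 5 × ZMod n) :
    (Un n).Reachable x (2, t) := by
  obtain ⟨p, -⟩ := exists_walk hn hev t (D n t x) x le_rfl
  exact ⟨p⟩

lemma connected (hn : 2 ≤ n) (hev : n % 2 = 0) : (Un n).Connected := by
  have : Nonempty (ZMod n) := ⟨0⟩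
  refine SimpleGraph.Connected.mk ?_
  intro x y
  exact (reach hn hev 0 x).trans (reach hn hev 0 y).symm

set_option maxHeartbeats 3000000 in
lemma resolve {k : ℕ} (hk : 5 ≤ k) :
    ∀ x y : Fin 5 × ZMod (2*k), unRel (2*k) x y →
      D (2*k) ((1:ℕ) : ZMod (2*k)) x ≠ D (2*k) ((1:ℕ) : ZMod (2*k)) y ∨
      D (2*k) ((k:ℕ) : ZMod (2*k)) x ≠ D (2*k) ((k:ℕ) : ZMod (2*k)) y := by
  have hnz : NeZero (2*k) := ⟨by omega⟩
  have hn : 2 ≤ 2*k := by omega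
  rintro ⟨ℓ, i⟩ ⟨ℓ', j⟩ h
  set t1 : ZMod (2*k) := ((1:ℕ) : ZMod (2*k)) with ht1
  set tk : ZMod (2*k) := ((k:ℕ) : ZMod (2*k)) with htk
  have V1 := ZMod.val_lt (i - t1)
  have V1a := ZMod.val_lt (i - t1 - 1)
  have S1a := val_succ hn (i - t1 - 1)
  rw [show i - t1 - 1 + 1 = i - t1 by ring] at S1a
  have S1b := val_succ hn (i - t1)
  have Vk := ZMod.val_lt (i - tk)
  have Vka := ZMod.val_lt (i - tk - 1)
  have Ska := val_succ hn (i - tk - 1)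
  rw [show i - tk - 1 + 1 = i - tk by ring] at Ska
  have Skb := val_succ hn (i - tk)
  have hval : (((k-1:ℕ)) : ZMod (2*k)).val = k - 1 := ZMod.val_natCast_of_lt (by omega)
  have hc : i - t1 = (i - tk) + ((k-1 : ℕ) : ZMod (2*k)) := by
    rw [ht1, htk]
    push_cast [Nat.cast_sub (by omega : 1 ≤ k)]
    ring
  have C := val_add_cases (i - tk) ((k-1:ℕ) : ZMod (2*k))
  rw [← hc, hval] at C
  have E1 : ∀ t : ZMod (2*k), i + 1 - t = i - t + 1 := fun t => by ring
  have E4 : ∀ t : ZMod (2*k), i - 1 - t = i - t - 1 := fun t => by ring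
  rcases h with ⟨(rfl | rfl | rfl), rfl, rfl⟩ | ⟨rfl, rfl, rfl⟩ | ⟨rfl, rfl, rfl⟩ |
    ⟨rfl, rfl, (rfl | hij)⟩ | ⟨rfl, rfl, rfl⟩
  · clear V1a S1a Vka Ska
    simp only [D, E1, E4, mm, ee, gg]; omega
  · clear V1a S1a Vka Ska
    simp only [D, E1, E4, mm, ee, gg]; omega
  · clear V1a S1a Vka Ska
    simp only [D, E1, E4, mm, ee, gg]; omega
  · clear V1a S1a Vka Ska S1b Skb
    simp only [D, E1, E4, mm, ee, gg]; omega
  · clear V1a S1a Vka Ska S1b Skb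
    simp only [D, E1, E4, mm, ee, gg]; omega
  · clear V1a S1a Vka Ska S1b Skb
    simp only [D, E1, E4, mm, ee, gg]; omega
  · obtain rfl : j = i - 1 := by have hij2 : i = j + 1 := hij; rw [hij2]; ring
    clear S1b Skb
    simp only [D, E1, E4, mm, ee, gg]; omega
  · clear V1a S1a Vka Ska S1b Skb
    simp only [D, E1, E4, mm, ee, gg]; omega

end LmdUn

open LmdUn in
theorem lmd_Un_even (k : ℕ) (hk : 5 ≤ k) :
    IsLocalResolvingSet (Un (2 * k))
      {((2 : Fin 5), ((1 : ℕ) : ZMod (2 * k))),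
       ((2 : Fin 5), ((k : ℕ) : ZMod (2 * k)))} ∧
    localMetricDim (Un (2 * k)) = 2 := by

  haveI : NeZero (2*k) := ⟨by omega⟩
  have hn : 2 ≤ 2*k := by omega
  have hev : (2*k) % 2 = 0 := by omega
  set t1 : ZMod (2*k) := ((1:ℕ) : ZMod (2*k)) with ht1
  set tk : ZMod (2*k) := ((k:ℕ) : ZMod (2*k)) with htk
  have hres : IsLocalResolvingSet (Un (2 * k))
      {((2 : Fin 5), t1), ((2 : Fin 5), tk)} := by
    intro u v hadj
    have key : D (2*k) t1 u ≠ D (2*k) t1 v ∨ D (2*k) tk u ≠ D (2*k) tk v := by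
      rcases adj_iff.mp hadj with ⟨-, hr | hr⟩
      · exact resolve hk u v hr
      · rcases resolve hk v u hr with h | h
        · exact Or.inl h.symm
        · exact Or.inr h.symm
    rcases key with h | h
    · exact ⟨(2, t1), Set.mem_insert _ _,
        by rw [dist_eq_D hn hev t1 u, dist_eq_D hn hev t1 v]; exact h⟩
    · exact ⟨(2, tk), Set.mem_insert_of_mem _ rfl,
        by rw [dist_eq_D hn hev tk u, dist_eq_D hn hev tk v]; exact h⟩
  refine ⟨hres, ?_⟩
  have hne10 : ((0:ZMod (2*k))) ≠ 1 := by
    have := ne_succ hn (0 : ZMod (2*k))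
    rwa [zero_add] at this
  have htne : t1 ≠ tk := by
    intro h
    have h1 : t1.val = 1 := ZMod.val_natCast_of_lt (by omega)
    have h2 : tk.val = k := ZMod.val_natCast_of_lt (by omega)
    rw [h] at h1
    omega
  have conn := connected (n := 2*k) hn hev
  have mem2 : 2 ∈ {m | ∃ W : Finset (Fin 5 × ZMod (2*k)),
      IsLocalResolvingSet (Un (2*k)) ↑W ∧ W.card = m} := by
    refine ⟨{(2, t1), (2, tk)}, ?_, ?_⟩
    · have : (({(2, t1), (2, tk)} : Finset (Fin 5 × ZMod (2*k))) : Set (Fin 5 × ZMod (2*k)))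
          = {((2 : Fin 5), t1), ((2 : Fin 5), tk)} := by simp
      rw [this]; exact hres
    · rw [Finset.card_insert_of_notMem (by simp [htne]), Finset.card_singleton]
  unfold localMetricDim
  refine le_antisymm (Nat.sInf_le mem2) (le_csInf ⟨2, mem2⟩ ?_)
  rintro m ⟨W, hW, rfl⟩
  by_contra hlt
  push_neg at hlt
  have hcases : W.card = 0 ∨ W.card = 1 := by omega
  rcases hcases with h | h
  · -- empty
    rw [Finset.card_eq_zero] at h
    subst h
    obtain ⟨w, hw, -⟩ := hW (0, 0) (0, 1) (adj_iff.mpr ⟨ne_of_idx hne10,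
      Or.inl (Or.inl ⟨Or.inl rfl, rfl, (zero_add (1 : ZMod (2*k))).symm⟩)⟩)
    simp at hw
  · -- singleton
    rw [Finset.card_eq_one] at h
    obtain ⟨w0, rfl⟩ := h
    have T : ∀ a b : Fin 5 × ZMod (2*k), (Un (2*k)).Adj a b →
        (Un (2*k)).dist a w0 ≤ (Un (2*k)).dist b w0 + 1 := by
      intro a b hab
      have h1 : (Un (2*k)).dist a b ≤ 1 := by
        have := SimpleGraph.dist_le (SimpleGraph.Walk.cons hab SimpleGraph.Walk.nil)
        simpa using this
      have h2 := conn.dist_triangle (u := a) (v := b) (w := w0)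
      omega
    have use : ∀ a b : Fin 5 × ZMod (2*k), (Un (2*k)).Adj a b →
        (Un (2*k)).dist a w0 ≠ (Un (2*k)).dist b w0 := by
      intro a b hab
      obtain ⟨w, hw, hne⟩ := hW a b hab
      simp only [Finset.coe_singleton, Set.mem_singleton_iff] at hw
      subst hw
      exact hne
    have a1 : (Un (2*k)).Adj (1, (0:ZMod (2*k))) (2, 0) :=
      adj_iff.mpr ⟨by simp [Prod.ext_iff], Or.inl (Or.inr (Or.inr (Or.inl ⟨rfl, rfl, rfl⟩)))⟩
    have a2 : (Un (2*k)).Adj (2, (0:ZMod (2*k))) (3, 0) :=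
      adj_iff.mpr ⟨by simp [Prod.ext_iff],
        Or.inl (Or.inr (Or.inr (Or.inr (Or.inl ⟨rfl, rfl, Or.inl rfl⟩))))⟩
    have a3 : (Un (2*k)).Adj (3, (0:ZMod (2*k))) (2, 1) :=
      adj_iff.mpr ⟨by simp [Prod.ext_iff],
        Or.inr (Or.inr (Or.inr (Or.inr (Or.inl ⟨rfl, rfl, Or.inr (zero_add 1).symm⟩))))⟩
    have a4 : (Un (2*k)).Adj (2, (1:ZMod (2*k))) (1, 1) :=
      adj_iff.mpr ⟨by simp [Prod.ext_iff],
        Or.inr (Or.inr (Or.inr (Or.inl ⟨rfl, rfl, rfl⟩)))⟩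
    have a5 : (Un (2*k)).Adj (1, (1:ZMod (2*k))) (1, 0) :=
      adj_iff.mpr ⟨ne_of_idx hne10.symm,
        Or.inr (Or.inl ⟨Or.inr (Or.inl rfl), rfl, (zero_add (1 : ZMod (2*k))).symm⟩)⟩
    have u1 := use _ _ a1
    have u2 := use _ _ a2
    have u3 := use _ _ a3
    have u4 := use _ _ a4
    have u5 := use _ _ a5
    have t1' := T _ _ a1
    have t2 := T _ _ a2
    have t3 := T _ _ a3
    have t4 := T _ _ a4
    have t5 := T _ _ a5
    have t1s := T _ _ a1.symm
    have t2s := T _ _ a2.symm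
    have t3s := T _ _ a3.symm
    have t4s := T _ _ a4.symm
    have t5s := T _ _ a5.symm
    omega
end

section
/- For n = 2k+1 with k ≥ 1, every strong resolving set of U_n has at least 2n elements. -/
namespace UnAux

lemma unAdj_iff {n : ℕ} {x y : Fin 5 × ZMod n} :
    (Un n).Adj x y ↔ x ≠ y ∧ (unRel n x y ∨ unRel n y x) := by
  simp [Un, SimpleGraph.fromRel_adj]

lemma zmod_one_ne_zero {n : ℕ} (hn : 2 ≤ n) : (1 : ZMod n) ≠ 0 := by
  intro h
  have h1 : (1 : ZMod n).val = 1 % n := ZMod.val_one_eq_one_mod n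
  rw [h, ZMod.val_zero, Nat.mod_eq_of_lt (by omega)] at h1
  omega

lemma adj_horiz {n : ℕ} (hn : 2 ≤ n) (ℓ : Fin 5) (hℓ : ℓ = 0 ∨ ℓ = 1 ∨ ℓ = 4)
    (j : ZMod n) : (Un n).Adj (ℓ, j) (ℓ, j + 1) := by
  rw [unAdj_iff]
  refine ⟨?_, Or.inl (Or.inl ⟨hℓ, rfl, rfl⟩)⟩
  intro h
  have h2 : j = j + 1 := congrArg Prod.snd h
  exact zmod_one_ne_zero hn (by linear_combination h2.symm)

lemma adj_AB {n : ℕ} (j : ZMod n) : (Un n).Adj (0, j) (1, j) := by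
  rw [unAdj_iff]
  exact ⟨by simp [Prod.ext_iff], Or.inl (Or.inr (Or.inl ⟨rfl, rfl, rfl⟩))⟩

lemma adj_BC {n : ℕ} (j : ZMod n) : (Un n).Adj (1, j) (2, j) := by
  rw [unAdj_iff]
  exact ⟨by simp [Prod.ext_iff], Or.inl (Or.inr (Or.inr (Or.inl ⟨rfl, rfl, rfl⟩)))⟩

lemma adj_CD {n : ℕ} (j : ZMod n) : (Un n).Adj (2, j) (3, j) := by
  rw [unAdj_iff]
  exact ⟨by simp [Prod.ext_iff],
    Or.inl (Or.inr (Or.inr (Or.inr (Or.inl ⟨rfl, rfl, Or.inl rfl⟩))))⟩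

lemma adj_CD' {n : ℕ} (j : ZMod n) : (Un n).Adj (2, j + 1) (3, j) := by
  rw [unAdj_iff]
  exact ⟨by simp [Prod.ext_iff],
    Or.inl (Or.inr (Or.inr (Or.inr (Or.inl ⟨rfl, rfl, Or.inr rfl⟩))))⟩

lemma adj_DE {n : ℕ} (j : ZMod n) : (Un n).Adj (3, j) (4, j) := by
  rw [unAdj_iff]
  exact ⟨by simp [Prod.ext_iff], Or.inl (Or.inr (Or.inr (Or.inr (Or.inr ⟨rfl, rfl, rfl⟩))))⟩


open SimpleGraph

lemma walk_horiz {n : ℕ} (hn : 2 ≤ n) (ℓ : Fin 5) (hℓ : ℓ = 0 ∨ ℓ = 1 ∨ ℓ = 4)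
    (j : ZMod n) (m : ℕ) :
    ∃ p : (Un n).Walk (ℓ, j) (ℓ, j + (m : ZMod n)), p.length = m := by
  induction m with
  | zero =>
    exact ⟨Walk.nil.copy rfl (by rw [Nat.cast_zero, add_zero]), by simp⟩
  | succ m ih =>
    obtain ⟨p, hp⟩ := ih
    have hadj : (Un n).Adj (ℓ, j + (m : ZMod n)) (ℓ, j + ((m+1 : ℕ) : ZMod n)) := by
      have : (j + ((m+1 : ℕ) : ZMod n)) = (j + (m : ZMod n)) + 1 := by push_cast; ring
      rw [this]; exact adj_horiz hn ℓ hℓ _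
    exact ⟨p.concat hadj, by rw [Walk.length_concat, hp]⟩

lemma dist_horiz {n : ℕ} (hn : 2 ≤ n) (ℓ : Fin 5) (hℓ : ℓ = 0 ∨ ℓ = 1 ∨ ℓ = 4)
    (j : ZMod n) (m : ℕ) : (Un n).dist (ℓ, j) (ℓ, j + (m : ZMod n)) ≤ m := by
  obtain ⟨p, hp⟩ := walk_horiz hn ℓ hℓ j m
  exact le_trans (SimpleGraph.dist_le p) (le_of_eq hp)

lemma reach_vert {n : ℕ} (ℓ : Fin 5) (j : ZMod n) : (Un n).Reachable (ℓ, j) (0, j) := by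
  have r1 : (Un n).Reachable (1, j) (0, j) := (adj_AB j).symm.reachable
  have r2 : (Un n).Reachable (2, j) (0, j) := ((adj_BC j).symm.reachable).trans r1
  have r3 : (Un n).Reachable (3, j) (0, j) := ((adj_CD j).symm.reachable).trans r2
  have r4 : (Un n).Reachable (4, j) (0, j) := ((adj_DE j).symm.reachable).trans r3
  fin_cases ℓ
  · rfl
  · exact r1
  · exact r2
  · exact r3
  · exact r4

lemma un_connected {n : ℕ} [NeZero n] (hn : 2 ≤ n) : (Un n).Connected := by
  rw [SimpleGraph.connected_iff]
  refine ⟨fun x y => ?_, ⟨(0, 0)⟩⟩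
  refine (reach_vert x.1 x.2).trans (Reachable.trans ?_ (reach_vert y.1 y.2).symm)
  have : y.2 = x.2 + (((y.2 - x.2).val : ℕ) : ZMod n) := by
    rw [ZMod.natCast_val, ZMod.cast_id]; ring
  rw [this]
  obtain ⟨p, -⟩ := walk_horiz hn 0 (Or.inl rfl) x.2 (y.2 - x.2).val
  exact p.reachable


lemma val_add_one {n : ℕ} [NeZero n] (hn : 2 ≤ n) (d : ZMod n) :
    ((d + 1).val = d.val + 1 ∧ d.val + 1 < n) ∨ ((d + 1).val = 0 ∧ d.val + 1 = n) := by
  have h1 : (1 : ZMod n).val = 1 := by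
    rw [ZMod.val_one_eq_one_mod, Nat.mod_eq_of_lt (by omega)]
  have h2 : (d + 1).val = (d.val + 1) % n := by rw [ZMod.val_add, h1]
  have h3 : d.val < n := ZMod.val_lt d
  rcases lt_or_eq_of_le (Nat.succ_le_of_lt h3) with h | h
  · left; rw [h2, Nat.mod_eq_of_lt h]; exact ⟨rfl, h⟩
  · right
    have h' : d.val + 1 = n := h
    rw [h2, h', Nat.mod_self]; exact ⟨rfl, rfl⟩

lemma val_sub_one {n : ℕ} [NeZero n] (hn : 2 ≤ n) (d : ZMod n) :
    ((d - 1).val = d.val - 1 ∧ 1 ≤ d.val) ∨ ((d - 1).val = n - 1 ∧ d.val = 0) := by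
  have := val_add_one hn (d - 1)
  rw [sub_add_cancel] at this
  have h3 : (d-1).val < n := ZMod.val_lt _
  rcases this with ⟨h1, h2⟩ | ⟨h1, h2⟩
  · left; omega
  · right; omega

/-- cyclic distance from 0 for a representative t ∈ [0, n) -/
def cycd (n t : ℕ) : ℕ := min t (n - t)

/-- Distance-to-`e J` lower bound certificate. -/
def FA (n : ℕ) (J : ZMod n) (x : Fin 5 × ZMod n) : ℕ :=
  if x.1.val = 4 then cycd n (x.2 - J).val
  else if x.1.val = 3 then 1 + cycd n (x.2 - J).val
  else (4 - x.1.val) + min (cycd n (x.2 - J).val) (cycd n (x.2 - J - 1).val)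

/-- Distance-to-`d J` lower bound certificate. -/
def FB (n : ℕ) (J : ZMod n) (x : Fin 5 × ZMod n) : ℕ :=
  if x.1.val = 4 then 1 + cycd n (x.2 - J).val
  else if x.1.val = 3 then min (2 * cycd n (x.2 - J).val) (2 + cycd n (x.2 - J).val)
  else if x.1.val = 2 then
    min (min (2 * (n - (x.2 - J).val) + 1)
      (if (x.2 - J).val = 0 then 1 else 2 * (x.2 - J).val - 1))
      (3 + min (cycd n (x.2 - J).val) (cycd n (x.2 - J - 1).val))
  else (3 - x.1.val) + min (cycd n (x.2 - J).val) (cycd n (x.2 - J - 1).val)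

lemma cert_walk {V : Type*} {G : SimpleGraph V} (F : V → ℕ)
    (hF : ∀ x y, G.Adj x y → F x ≤ F y + 1) {u v : V} (p : G.Walk u v) :
    F u ≤ p.length + F v := by
  induction p with
  | nil => simp
  | cons h q ih =>
    have := hF _ _ h
    rw [Walk.length_cons]
    omega

lemma cert_dist {V : Type*} {G : SimpleGraph V} (hc : G.Connected) (F : V → ℕ)
    (hF : ∀ x y, G.Adj x y → F x ≤ F y + 1) (u v : V) :
    F u ≤ G.dist u v + F v := by
  obtain ⟨p, hp⟩ := hc.exists_walk_length_eq_dist u v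
  have := cert_walk F hF p
  omega


lemma FA_a {n : ℕ} (J j : ZMod n) : FA n J (0, j)
    = 4 + min (cycd n (j - J).val) (cycd n (j - J - 1).val) := by norm_num [FA]
lemma FA_b {n : ℕ} (J j : ZMod n) : FA n J (1, j)
    = 3 + min (cycd n (j - J).val) (cycd n (j - J - 1).val) := by norm_num [FA]
lemma FA_c {n : ℕ} (J j : ZMod n) : FA n J (2, j)
    = 2 + min (cycd n (j - J).val) (cycd n (j - J - 1).val) := by norm_num [FA]
lemma FA_d {n : ℕ} (J j : ZMod n) : FA n J (3, j) = 1 + cycd n (j - J).val := rfl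
lemma FA_e {n : ℕ} (J j : ZMod n) : FA n J (4, j) = cycd n (j - J).val := rfl

lemma FA_lip {n : ℕ} [NeZero n] (hn : 3 ≤ n) (J : ZMod n) :
    ∀ x y, (Un n).Adj x y → FA n J x ≤ FA n J y + 1 := by
  have key : ∀ x y, unRel n x y → FA n J x ≤ FA n J y + 1 ∧ FA n J y ≤ FA n J x + 1 := by
    rintro ⟨x1, x2⟩ ⟨y1, y2⟩ h
    rcases h with ⟨h1, h2, h3⟩ | ⟨h1, h2, h3⟩ | ⟨h1, h2, h3⟩ | ⟨h1, h2, h3⟩ | ⟨h1, h2, h3⟩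
    · simp only at h1 h2 h3
      subst h3
      have hd1 := val_add_one (n := n) (by omega) (x2 - J)
      have hd2 := val_sub_one (n := n) (by omega) (x2 - J)
      have hlt : (x2 - J).val < n := ZMod.val_lt _
      have e2 : x2 + 1 - J - 1 = x2 - J := by ring
      have e1 : x2 + 1 - J = (x2 - J) + 1 := by ring
      rcases h1 with h1 | h1 | h1 <;> (subst h1; rw [← h2])
      · rw [FA_a, FA_a, e2, e1]; simp only [cycd]; omega
      · rw [FA_b, FA_b, e2, e1]; simp only [cycd]; omega
      · rw [FA_e, FA_e, e1]; simp only [cycd]; omega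
    · simp only at h1 h2 h3
      subst h1; subst h2; subst h3
      rw [FA_a, FA_b]; omega
    · simp only at h1 h2 h3
      subst h1; subst h2; subst h3
      rw [FA_b, FA_c]; omega
    · simp only at h1 h2 h3
      subst h1; subst h2
      rcases h3 with h3 | h3
      · subst h3
        rw [FA_c, FA_d]
        have hd2 := val_sub_one (n := n) (by omega) (x2 - J)
        have hlt : (x2 - J).val < n := ZMod.val_lt _
        simp only [cycd]; omega
      · subst h3
        have hd1 := val_add_one (n := n) (by omega) (y2 - J)
        have hlt : (y2 - J).val < n := ZMod.val_lt _
        have f2 : y2 + 1 - J - 1 = y2 - J := by ring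
        have f1 : y2 + 1 - J = (y2 - J) + 1 := by ring
        rw [FA_c, FA_d, f2, f1]
        simp only [cycd]; omega
    · simp only at h1 h2 h3
      subst h1; subst h2; subst h3
      rw [FA_d, FA_e]; omega
  intro x y h
  rw [unAdj_iff] at h
  rcases h with ⟨-, h | h⟩
  · exact (key _ _ h).1
  · exact (key _ _ h).2


lemma FB_a {n : ℕ} (J j : ZMod n) : FB n J (0, j)
    = 3 + min (cycd n (j - J).val) (cycd n (j - J - 1).val) := rfl
lemma FB_b {n : ℕ} (J j : ZMod n) : FB n J (1, j)
    = 2 + min (cycd n (j - J).val) (cycd n (j - J - 1).val) := rfl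
lemma FB_c {n : ℕ} (J j : ZMod n) : FB n J (2, j)
    = min (min (2 * (n - (j - J).val) + 1)
        (if (j - J).val = 0 then 1 else 2 * (j - J).val - 1))
        (3 + min (cycd n (j - J).val) (cycd n (j - J - 1).val)) := rfl
lemma FB_d {n : ℕ} (J j : ZMod n) : FB n J (3, j)
    = min (2 * cycd n (j - J).val) (2 + cycd n (j - J).val) := rfl
lemma FB_e {n : ℕ} (J j : ZMod n) : FB n J (4, j) = 1 + cycd n (j - J).val := rfl

lemma FB_lip {n : ℕ} [NeZero n] (hn : 3 ≤ n) (J : ZMod n) :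
    ∀ x y, (Un n).Adj x y → FB n J x ≤ FB n J y + 1 := by
  have key : ∀ x y, unRel n x y → FB n J x ≤ FB n J y + 1 ∧ FB n J y ≤ FB n J x + 1 := by
    rintro ⟨x1, x2⟩ ⟨y1, y2⟩ h
    rcases h with ⟨h1, h2, h3⟩ | ⟨h1, h2, h3⟩ | ⟨h1, h2, h3⟩ | ⟨h1, h2, h3⟩ | ⟨h1, h2, h3⟩
    · simp only at h1 h2 h3
      subst h3
      have hd1 := val_add_one (n := n) (by omega) (x2 - J)
      have hd2 := val_sub_one (n := n) (by omega) (x2 - J)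
      have hlt : (x2 - J).val < n := ZMod.val_lt _
      have e2 : x2 + 1 - J - 1 = x2 - J := by ring
      have e1 : x2 + 1 - J = (x2 - J) + 1 := by ring
      rcases h1 with h1 | h1 | h1 <;> (subst h1; rw [← h2])
      · rw [FB_a, FB_a, e2, e1]; simp only [cycd]; omega
      · rw [FB_b, FB_b, e2, e1]; simp only [cycd]; omega
      · rw [FB_e, FB_e, e1]; simp only [cycd]; omega
    · simp only at h1 h2 h3
      subst h1; subst h2; subst h3
      rw [FB_a, FB_b]; omega
    · simp only at h1 h2 h3
      subst h1; subst h2; subst h3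
      rw [FB_b, FB_c]
      have hd2 := val_sub_one (n := n) (by omega) (x2 - J)
      have hlt : (x2 - J).val < n := ZMod.val_lt _
      rcases eq_or_ne (x2 - J).val 0 with h0 | h0
      · rw [if_pos h0]; simp only [cycd]; omega
      · rw [if_neg h0]; simp only [cycd]; omega
    · simp only at h1 h2 h3
      subst h1; subst h2
      rcases h3 with h3 | h3
      · subst h3
        rw [FB_c, FB_d]
        have hd2 := val_sub_one (n := n) (by omega) (x2 - J)
        have hlt : (x2 - J).val < n := ZMod.val_lt _
        rcases eq_or_ne (x2 - J).val 0 with h0 | h0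
        · rw [if_pos h0]; simp only [cycd]; omega
        · rw [if_neg h0]; simp only [cycd]; omega
      · subst h3
        have hd1 := val_add_one (n := n) (by omega) (y2 - J)
        have hlt : (y2 - J).val < n := ZMod.val_lt _
        have f2 : y2 + 1 - J - 1 = y2 - J := by ring
        have f1 : y2 + 1 - J = (y2 - J) + 1 := by ring
        rw [FB_c, FB_d, f2, f1]
        rcases eq_or_ne ((y2 - J) + 1).val 0 with h0 | h0
        · rw [if_pos h0]; simp only [cycd]; omega
        · rw [if_neg h0]; simp only [cycd]; omega
    · simp only at h1 h2 h3
      subst h1; subst h2; subst h3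
      rw [FB_d, FB_e]; omega
  intro x y h
  rw [unAdj_iff] at h
  rcases h with ⟨-, h | h⟩
  · exact (key _ _ h).1
  · exact (key _ _ h).2


lemma nbr_a {n : ℕ} {i : ZMod n} {w : Fin 5 × ZMod n} (h : (Un n).Adj (0, i) w) :
    w = (0, i + 1) ∨ w = (0, i - 1) ∨ w = (1, i) := by
  rw [unAdj_iff] at h
  obtain ⟨w1, w2⟩ := w
  obtain ⟨-, h | h⟩ := h <;>
    rcases h with ⟨h1, h2, h3⟩ | ⟨h1, h2, h3⟩ | ⟨h1, h2, h3⟩ | ⟨h1, h2, h3⟩ | ⟨h1, h2, h3⟩ <;>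
    simp only at h1 h2 h3
  · exact Or.inl (by rw [← h2, h3])
  · exact Or.inr (Or.inr (by rw [h2, h3]))
  · exact absurd h1 (by decide)
  · exact absurd h1 (by decide)
  · exact absurd h1 (by decide)
  · exact Or.inr (Or.inl (by rw [h2]; exact congrArg _ (eq_sub_of_add_eq h3.symm)))
  · exact absurd h2 (by decide)
  · exact absurd h2 (by decide)
  · exact absurd h2 (by decide)
  · exact absurd h2 (by decide)

lemma nbr_e {n : ℕ} {j : ZMod n} {w : Fin 5 × ZMod n} (h : (Un n).Adj (4, j) w) :
    w = (4, j + 1) ∨ w = (4, j - 1) ∨ w = (3, j) := by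
  rw [unAdj_iff] at h
  obtain ⟨w1, w2⟩ := w
  obtain ⟨-, h | h⟩ := h <;>
    rcases h with ⟨h1, h2, h3⟩ | ⟨h1, h2, h3⟩ | ⟨h1, h2, h3⟩ | ⟨h1, h2, h3⟩ | ⟨h1, h2, h3⟩ <;>
    simp only at h1 h2 h3
  · exact Or.inl (by rw [← h2, h3])
  · exact absurd h1 (by decide)
  · exact absurd h1 (by decide)
  · exact absurd h1 (by decide)
  · exact absurd h1 (by decide)
  · exact Or.inr (Or.inl (by rw [h2]; exact congrArg _ (eq_sub_of_add_eq h3.symm)))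
  · exact absurd h2 (by decide)
  · exact absurd h2 (by decide)
  · exact absurd h2 (by decide)
  · exact Or.inr (Or.inr (by rw [h1, h3]))

lemma nbr_c {n : ℕ} {i : ZMod n} {w : Fin 5 × ZMod n} (h : (Un n).Adj (2, i) w) :
    w = (1, i) ∨ w = (3, i) ∨ w = (3, i - 1) := by
  rw [unAdj_iff] at h
  obtain ⟨w1, w2⟩ := w
  obtain ⟨-, h | h⟩ := h <;>
    rcases h with ⟨h1, h2, h3⟩ | ⟨h1, h2, h3⟩ | ⟨h1, h2, h3⟩ | ⟨h1, h2, h3⟩ | ⟨h1, h2, h3⟩ <;>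
    simp only at h1 h2 h3
  · exact absurd h1 (by decide)
  · exact absurd h1 (by decide)
  · exact absurd h1 (by decide)
  · rcases h3 with h3 | h3
    · exact Or.inr (Or.inl (by rw [h2, h3]))
    · exact Or.inr (Or.inr (by rw [h2]; exact congrArg _ (eq_sub_of_add_eq h3.symm)))
  · exact absurd h1 (by decide)
  · rw [h2] at h1; exact absurd h1 (by decide)
  · exact absurd h2 (by decide)
  · exact Or.inl (by rw [h1, h3])
  · exact absurd h2 (by decide)
  · exact absurd h2 (by decide)

lemma nbr_d {n : ℕ} {j : ZMod n} {w : Fin 5 × ZMod n} (h : (Un n).Adj (3, j) w) :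
    w = (4, j) ∨ w = (2, j) ∨ w = (2, j + 1) := by
  rw [unAdj_iff] at h
  obtain ⟨w1, w2⟩ := w
  obtain ⟨-, h | h⟩ := h <;>
    rcases h with ⟨h1, h2, h3⟩ | ⟨h1, h2, h3⟩ | ⟨h1, h2, h3⟩ | ⟨h1, h2, h3⟩ | ⟨h1, h2, h3⟩ <;>
    simp only at h1 h2 h3
  · exact absurd h1 (by decide)
  · exact absurd h1 (by decide)
  · exact absurd h1 (by decide)
  · exact absurd h1 (by decide)
  · exact Or.inl (by rw [h2, h3])
  · rw [h2] at h1; exact absurd h1 (by decide)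
  · exact absurd h2 (by decide)
  · exact absurd h2 (by decide)
  · rcases h3 with h3 | h3
    · exact Or.inr (Or.inl (by rw [h1, h3]))
    · exact Or.inr (Or.inr (by rw [h1, h3]))
  · exact absurd h2 (by decide)


lemma dist_adj {V : Type*} {G : SimpleGraph V} {x y : V} (h : G.Adj x y) :
    G.dist x y ≤ 1 := by
  simpa using SimpleGraph.dist_le (SimpleGraph.Walk.cons h SimpleGraph.Walk.nil)

lemma dist_concat {V : Type*} {G : SimpleGraph V} (hc : G.Connected) {x y z : V} {m : ℕ}
    (hd : G.dist x y ≤ m) (h : G.Adj y z) : G.dist x z ≤ m + 1 := by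
  have h1 := hc.dist_triangle (u := x) (v := y) (w := z)
  have h2 := dist_adj h
  omega

lemma dist_cons {V : Type*} {G : SimpleGraph V} (hc : G.Connected) {x y z : V} {m : ℕ}
    (h : G.Adj x y) (hd : G.dist y z ≤ m) : G.dist x z ≤ m + 1 := by
  have h1 := hc.dist_triangle (u := x) (v := y) (w := z)
  have h2 := dist_adj h
  omega

lemma no_ext {V : Type*} {G : SimpleGraph V} (hc : G.Connected) {u v x : V}
    (hu : ∀ w, G.Adj u w → G.dist v w ≤ G.dist v u)
    (hx : G.dist v x = G.dist v u + G.dist u x) (hxu : x ≠ u) : False := by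
  have hpos : 0 < G.dist u x := hc.pos_dist_of_ne (fun h => hxu h.symm)
  obtain ⟨p, hp⟩ := (hc.preconnected u x).exists_walk_length_eq_dist
  cases p with
  | nil => exact hxu rfl
  | @cons _ b _ h q =>
    have h1 : G.dist b x ≤ q.length := SimpleGraph.dist_le q
    have h2 := hc.dist_triangle (u := v) (v := b) (w := x)
    have h3 := hu _ h
    rw [SimpleGraph.Walk.length_cons] at hp
    omega

lemma key_hit {V : Type*} {G : SimpleGraph V} (hc : G.Connected) {S : Set V}
    (hS : ∀ u v : V, u ≠ v → ∃ x ∈ S, G.dist v x = G.dist v u + G.dist u x ∨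
      G.dist u x = G.dist u v + G.dist v x)
    {u v : V} (huv : u ≠ v)
    (hu : ∀ w, G.Adj u w → G.dist v w ≤ G.dist v u)
    (hv : ∀ w, G.Adj v w → G.dist u w ≤ G.dist u v) :
    ∃ x ∈ S, x = u ∨ x = v := by
  obtain ⟨x, hxS, hx⟩ := hS u v huv
  refine ⟨x, hxS, ?_⟩
  by_contra hcon
  push_neg at hcon
  rcases hx with hx | hx
  · exact no_ext hc hu hx hcon.1
  · exact no_ext hc hv hx hcon.2


lemma lower_A {k : ℕ} (hk : 1 ≤ k) (i : ZMod (2*k+1)) :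
    k + 3 ≤ (Un (2*k+1)).dist (0, i) (4, i + ((k : ℕ) : ZMod (2*k+1))) := by
  haveI : NeZero (2*k+1) := ⟨by omega⟩
  have hc := un_connected (n := 2*k+1) (by omega)
  have hz : ((2*k+1 : ℕ) : ZMod (2*k+1)) = 0 := ZMod.natCast_self _
  push_cast at hz
  have h := cert_dist hc (FA (2*k+1) (i + ((k : ℕ) : ZMod (2*k+1))))
    (FA_lip (by omega) _) (0, i) (4, i + ((k : ℕ) : ZMod (2*k+1)))
  rw [FA_a, FA_e] at h
  have e0 : (i + ((k : ℕ) : ZMod (2*k+1))) - (i + ((k : ℕ) : ZMod (2*k+1)))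
      = ((0 : ℕ) : ZMod (2*k+1)) := by push_cast; ring
  have e1 : i - (i + ((k : ℕ) : ZMod (2*k+1))) = ((k+1 : ℕ) : ZMod (2*k+1)) := by
    push_cast; linear_combination -hz
  have e2 : i - (i + ((k : ℕ) : ZMod (2*k+1))) - 1 = ((k : ℕ) : ZMod (2*k+1)) := by
    push_cast; linear_combination -hz
  rw [e0, e2, e1, ZMod.val_cast_of_lt (by omega), ZMod.val_cast_of_lt (by omega),
    ZMod.val_cast_of_lt (by omega)] at h
  simp only [cycd] at h
  omega

lemma lower_B {k : ℕ} (hk : 1 ≤ k) (i : ZMod (2*k+1)) :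
    k + 2 ≤ (Un (2*k+1)).dist (2, i) (3, i + ((k : ℕ) : ZMod (2*k+1))) := by
  haveI : NeZero (2*k+1) := ⟨by omega⟩
  have hc := un_connected (n := 2*k+1) (by omega)
  have hz : ((2*k+1 : ℕ) : ZMod (2*k+1)) = 0 := ZMod.natCast_self _
  push_cast at hz
  have h := cert_dist hc (FB (2*k+1) (i + ((k : ℕ) : ZMod (2*k+1))))
    (FB_lip (by omega) _) (2, i) (3, i + ((k : ℕ) : ZMod (2*k+1)))
  rw [FB_c, FB_d] at h
  have e0 : (i + ((k : ℕ) : ZMod (2*k+1))) - (i + ((k : ℕ) : ZMod (2*k+1)))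
      = ((0 : ℕ) : ZMod (2*k+1)) := by push_cast; ring
  have e1 : i - (i + ((k : ℕ) : ZMod (2*k+1))) = ((k+1 : ℕ) : ZMod (2*k+1)) := by
    push_cast; linear_combination -hz
  have e2 : i - (i + ((k : ℕ) : ZMod (2*k+1))) - 1 = ((k : ℕ) : ZMod (2*k+1)) := by
    push_cast; linear_combination -hz
  rw [e0, e2, e1, ZMod.val_cast_of_lt (by omega), ZMod.val_cast_of_lt (by omega),
    ZMod.val_cast_of_lt (by omega)] at h
  rw [if_neg (by omega)] at h
  simp only [cycd] at h
  omega


lemma hit_A {k : ℕ} (hk : 1 ≤ k) {S : Set (Fin 5 × ZMod (2*k+1))}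
    (hS : ∀ u v : Fin 5 × ZMod (2*k+1), u ≠ v → ∃ x ∈ S,
      (Un (2*k+1)).dist v x = (Un (2*k+1)).dist v u + (Un (2*k+1)).dist u x ∨
      (Un (2*k+1)).dist u x = (Un (2*k+1)).dist u v + (Un (2*k+1)).dist v x)
    (i : ZMod (2*k+1)) :
    ∃ x ∈ S, x = (0, i) ∨ x = (4, i + ((k : ℕ) : ZMod (2*k+1))) := by
  haveI : NeZero (2*k+1) := ⟨by omega⟩
  have hc := un_connected (n := 2*k+1) (by omega)
  have hz : ((2*k+1 : ℕ) : ZMod (2*k+1)) = 0 := ZMod.natCast_self _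
  push_cast at hz
  have hlow := lower_A hk i
  have hn2 : 2 ≤ 2*k+1 := by omega
  refine key_hit hc hS (fun h => by have h1 := congrArg Prod.fst h; simp at h1) ?_ ?_
  · intro w hw
    have hcomm2 : (Un (2*k+1)).dist ((4 : Fin 5), i + ((k : ℕ) : ZMod (2*k+1))) (0, i)
        = (Un (2*k+1)).dist (0, i) (4, i + ((k : ℕ) : ZMod (2*k+1))) := SimpleGraph.dist_comm
    rcases nbr_a hw with rfl | rfl | rfl
    · have s1 := dist_horiz hn2 0 (Or.inl rfl) (i + 1) (k-1)
      rw [show i + 1 + ((k-1 : ℕ) : ZMod (2*k+1)) = i + ((k : ℕ) : ZMod (2*k+1)) by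
        push_cast [Nat.cast_sub hk]; ring] at s1
      have s2 := dist_concat hc s1 (adj_AB _)
      have s3 := dist_concat hc s2 (adj_BC _)
      have s4 := dist_concat hc s3 (adj_CD _)
      have s5 := dist_concat hc s4 (adj_DE _)
      have hcomm1 : (Un (2*k+1)).dist ((4 : Fin 5), i + ((k : ℕ) : ZMod (2*k+1))) (0, i + 1)
          = (Un (2*k+1)).dist (0, i + 1) (4, i + ((k : ℕ) : ZMod (2*k+1))) :=
        SimpleGraph.dist_comm
      omega
    · have s1 := dist_horiz hn2 0 (Or.inl rfl) (i + ((k : ℕ) : ZMod (2*k+1)) + 1) (k-1)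
      rw [show i + ((k : ℕ) : ZMod (2*k+1)) + 1 + ((k-1 : ℕ) : ZMod (2*k+1)) = i - 1 by
        push_cast [Nat.cast_sub hk]; linear_combination hz] at s1
      have s2 := dist_cons hc (adj_AB _).symm s1
      have s3 := dist_cons hc (adj_BC _).symm s2
      have s4 := dist_cons hc (adj_CD' (i + ((k : ℕ) : ZMod (2*k+1)))).symm s3
      have s5 := dist_cons hc (adj_DE (i + ((k : ℕ) : ZMod (2*k+1)))).symm s4
      omega
    · have s1 := dist_horiz hn2 1 (Or.inr (Or.inl rfl)) i k
      have s2 := dist_concat hc s1 (adj_BC _)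
      have s3 := dist_concat hc s2 (adj_CD _)
      have s4 := dist_concat hc s3 (adj_DE _)
      have hcomm1 : (Un (2*k+1)).dist ((4 : Fin 5), i + ((k : ℕ) : ZMod (2*k+1))) (1, i)
          = (Un (2*k+1)).dist (1, i) (4, i + ((k : ℕ) : ZMod (2*k+1))) :=
        SimpleGraph.dist_comm
      omega
  · intro w hw
    rcases nbr_e hw with rfl | rfl | rfl
    · have s1 := dist_horiz hn2 4 (Or.inr (Or.inr rfl)) (i + ((k : ℕ) : ZMod (2*k+1)) + 1) (k-1)
      rw [show i + ((k : ℕ) : ZMod (2*k+1)) + 1 + ((k-1 : ℕ) : ZMod (2*k+1)) = i - 1 by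
        push_cast [Nat.cast_sub hk]; linear_combination hz] at s1
      have s2 := dist_concat hc s1 (adj_DE (i - 1)).symm
      have s3 := dist_concat hc s2 (adj_CD' (i - 1)).symm
      rw [show i - 1 + 1 = i by ring] at s3
      have s4 := dist_concat hc s3 (adj_BC i).symm
      have s5 := dist_concat hc s4 (adj_AB i).symm
      have hcomm1 : (Un (2*k+1)).dist ((0 : Fin 5), i) (4, i + ((k : ℕ) : ZMod (2*k+1)) + 1)
          = (Un (2*k+1)).dist (4, i + ((k : ℕ) : ZMod (2*k+1)) + 1) (0, i) :=
        SimpleGraph.dist_comm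
      omega
    · have s1 := dist_horiz hn2 4 (Or.inr (Or.inr rfl)) i (k-1)
      rw [show i + ((k-1 : ℕ) : ZMod (2*k+1)) = i + ((k : ℕ) : ZMod (2*k+1)) - 1 by
        push_cast [Nat.cast_sub hk]; ring] at s1
      have s2 := dist_cons hc (adj_DE i) s1
      have s3 := dist_cons hc (adj_CD i) s2
      have s4 := dist_cons hc (adj_BC i) s3
      have s5 := dist_cons hc (adj_AB i) s4
      omega
    · have s1 := dist_horiz hn2 1 (Or.inr (Or.inl rfl)) i k
      have s2 := dist_concat hc s1 (adj_BC _)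
      have s3 := dist_concat hc s2 (adj_CD _)
      have s4 := dist_cons hc (adj_AB i) s3
      omega

lemma hit_B {k : ℕ} (hk : 1 ≤ k) {S : Set (Fin 5 × ZMod (2*k+1))}
    (hS : ∀ u v : Fin 5 × ZMod (2*k+1), u ≠ v → ∃ x ∈ S,
      (Un (2*k+1)).dist v x = (Un (2*k+1)).dist v u + (Un (2*k+1)).dist u x ∨
      (Un (2*k+1)).dist u x = (Un (2*k+1)).dist u v + (Un (2*k+1)).dist v x)
    (i : ZMod (2*k+1)) :
    ∃ x ∈ S, x = (2, i) ∨ x = (3, i + ((k : ℕ) : ZMod (2*k+1))) := by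
  haveI : NeZero (2*k+1) := ⟨by omega⟩
  have hc := un_connected (n := 2*k+1) (by omega)
  have hz : ((2*k+1 : ℕ) : ZMod (2*k+1)) = 0 := ZMod.natCast_self _
  push_cast at hz
  have hlow := lower_B hk i
  have hn2 : 2 ≤ 2*k+1 := by omega
  refine key_hit hc hS (fun h => by have h1 := congrArg Prod.fst h; simp at h1) ?_ ?_
  · intro w hw
    have hcomm2 : (Un (2*k+1)).dist ((3 : Fin 5), i + ((k : ℕ) : ZMod (2*k+1))) (2, i)
        = (Un (2*k+1)).dist (2, i) (3, i + ((k : ℕ) : ZMod (2*k+1))) := SimpleGraph.dist_comm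
    rcases nbr_c hw with rfl | rfl | rfl
    · have s1 := dist_horiz hn2 1 (Or.inr (Or.inl rfl)) i k
      have s2 := dist_concat hc s1 (adj_BC _)
      have s3 := dist_concat hc s2 (adj_CD _)
      have hcomm1 : (Un (2*k+1)).dist ((3 : Fin 5), i + ((k : ℕ) : ZMod (2*k+1))) (1, i)
          = (Un (2*k+1)).dist (1, i) (3, i + ((k : ℕ) : ZMod (2*k+1))) :=
        SimpleGraph.dist_comm
      omega
    · have s1 := dist_horiz hn2 4 (Or.inr (Or.inr rfl)) i k
      have s2 := dist_concat hc s1 (adj_DE (i + ((k : ℕ) : ZMod (2*k+1)))).symm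
      have s3 := dist_cons hc (adj_DE i) s2
      have hcomm1 : (Un (2*k+1)).dist ((3 : Fin 5), i + ((k : ℕ) : ZMod (2*k+1))) (3, i)
          = (Un (2*k+1)).dist (3, i) (3, i + ((k : ℕ) : ZMod (2*k+1))) :=
        SimpleGraph.dist_comm
      omega
    · have s1 := dist_horiz hn2 4 (Or.inr (Or.inr rfl)) (i + ((k : ℕ) : ZMod (2*k+1))) k
      rw [show i + ((k : ℕ) : ZMod (2*k+1)) + ((k : ℕ) : ZMod (2*k+1)) = i - 1 by
        push_cast; linear_combination hz] at s1
      have s2 := dist_concat hc s1 (adj_DE (i - 1)).symm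
      have s3 := dist_cons hc (adj_DE (i + ((k : ℕ) : ZMod (2*k+1)))) s2
      omega
  · intro w hw
    rcases nbr_d hw with rfl | rfl | rfl
    · have s1 := dist_horiz hn2 4 (Or.inr (Or.inr rfl)) i k
      have s2 := dist_cons hc (adj_DE i) s1
      have s3 := dist_cons hc (adj_CD i) s2
      omega
    · have s1 := dist_horiz hn2 1 (Or.inr (Or.inl rfl)) i k
      have s2 := dist_concat hc s1 (adj_BC _)
      have s3 := dist_cons hc (adj_BC i).symm s2
      omega
    · have s1 := dist_horiz hn2 1 (Or.inr (Or.inl rfl)) (i + ((k : ℕ) : ZMod (2*k+1)) + 1) k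
      rw [show i + ((k : ℕ) : ZMod (2*k+1)) + 1 + ((k : ℕ) : ZMod (2*k+1)) = i by
        push_cast; linear_combination hz] at s1
      have s2 := dist_cons hc (adj_BC (i + ((k : ℕ) : ZMod (2*k+1)) + 1)).symm s1
      have s3 := dist_concat hc s2 (adj_BC i)
      have hcomm1 : (Un (2*k+1)).dist ((2 : Fin 5), i) (2, i + ((k : ℕ) : ZMod (2*k+1)) + 1)
          = (Un (2*k+1)).dist (2, i + ((k : ℕ) : ZMod (2*k+1)) + 1) (2, i) :=
        SimpleGraph.dist_comm
      omega
  
end UnAux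

theorem sdim_Un_odd_lower_bound (k : ℕ) (hk : 1 ≤ k) :
    ∀ S : Finset (Fin 5 × ZMod (2 * k + 1)),
      IsStrongResolvingSet (Un (2 * k + 1)) ↑S → 2 * (2 * k + 1) ≤ S.card := by
  intro S hS
  haveI : NeZero (2*k+1) := ⟨by omega⟩
  have hS' : ∀ u v : Fin 5 × ZMod (2*k+1), u ≠ v → ∃ x ∈ (↑S : Set (Fin 5 × ZMod (2*k+1))),
      (Un (2*k+1)).dist v x = (Un (2*k+1)).dist v u + (Un (2*k+1)).dist u x ∨
      (Un (2*k+1)).dist u x = (Un (2*k+1)).dist u v + (Un (2*k+1)).dist v x := hS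
  choose f hf1 hf2 using fun i => UnAux.hit_A hk hS' i
  choose g hg1 hg2 using fun i => UnAux.hit_B hk hS' i
  have hcard := Finset.card_le_card_of_injOn
    (f := fun p : Bool × ZMod (2*k+1) => if p.1 then f p.2 else g p.2)
    (s := Finset.univ) (t := S) ?_ ?_
  · rw [Finset.card_univ, Fintype.card_prod, Fintype.card_bool, ZMod.card] at hcard
    omega
  · rintro ⟨b, i⟩ -
    cases b
    · simpa using hg1 i
    · simpa using hf1 i
  · rintro ⟨pb, pi⟩ - ⟨qb, qi⟩ - h
    dsimp only at h
    cases pb <;> cases qb <;> simp only [if_true, if_false, Bool.false_eq_true] at h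
    · rcases hg2 pi with h1 | h1 <;> rcases hg2 qi with h2 | h2 <;> rw [h1, h2] at h
      · have h4 : pi = qi := congrArg Prod.snd h
        rw [h4]
      · have h3 : (2 : Fin 5) = 3 := congrArg Prod.fst h
        exact absurd h3 (by decide)
      · have h3 : (3 : Fin 5) = 2 := congrArg Prod.fst h
        exact absurd h3 (by decide)
      · have h4 : pi + ((k : ℕ) : ZMod (2*k+1)) = qi + ((k : ℕ) : ZMod (2*k+1)) :=
          congrArg Prod.snd h
        rw [add_right_cancel h4]
    · rcases hg2 pi with h1 | h1 <;> rcases hf2 qi with h2 | h2 <;> rw [h1, h2] at h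
      · have h3 : (2 : Fin 5) = 0 := congrArg Prod.fst h
        exact absurd h3 (by decide)
      · have h3 : (2 : Fin 5) = 4 := congrArg Prod.fst h
        exact absurd h3 (by decide)
      · have h3 : (3 : Fin 5) = 0 := congrArg Prod.fst h
        exact absurd h3 (by decide)
      · have h3 : (3 : Fin 5) = 4 := congrArg Prod.fst h
        exact absurd h3 (by decide)
    · rcases hf2 pi with h1 | h1 <;> rcases hg2 qi with h2 | h2 <;> rw [h1, h2] at h
      · have h3 : (0 : Fin 5) = 2 := congrArg Prod.fst h
        exact absurd h3 (by decide)
      · have h3 : (0 : Fin 5) = 3 := congrArg Prod.fst h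
        exact absurd h3 (by decide)
      · have h3 : (4 : Fin 5) = 2 := congrArg Prod.fst h
        exact absurd h3 (by decide)
      · have h3 : (4 : Fin 5) = 3 := congrArg Prod.fst h
        exact absurd h3 (by decide)
    · rcases hf2 pi with h1 | h1 <;> rcases hf2 qi with h2 | h2 <;> rw [h1, h2] at h
      · have h4 : pi = qi := congrArg Prod.snd h
        rw [h4]
      · have h3 : (0 : Fin 5) = 4 := congrArg Prod.fst h
        exact absurd h3 (by decide)
      · have h3 : (4 : Fin 5) = 0 := congrArg Prod.fst h
        exact absurd h3 (by decide)
      · have h4 : pi + ((k : ℕ) : ZMod (2*k+1)) = qi + ((k : ℕ) : ZMod (2*k+1)) :=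
          congrArg Prod.snd h
        rw [add_right_cancel h4]
end
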